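/- arXiv:2309.10290 — 8 statements merged into one kernel-verified Lean document; each statement's English description precedes it below -/
import Mathlib

section
/- Let V be a finite-dimensional real normed vector space and let C ⊆ V be a nonempty open convex cone (t•C = C for all t > 0) which is properly convex, i.e. closure(C) ∩ (−closure(C)) ⊆ {0}. Let x, y ∈ C with x − y ∉ closure(C) ∪ (−closure(C)). Then the set {u ∈ ℝ | (1−u)•y + u•x ∈ C} is bounded above and its supremum u* satisfies 1 < u* < ∞; moreover, for every continuous linear functional β : V → ℝ that is nonnegative on C and satisfies β(x) > 0, one has β(y)/β(x) ≤ u*/(u* − 1), and this inequality is strict whenever β((1−u*)•y + u*•x) > 0. -/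
open Pointwise

/-- The supremum `u*` of the set of parameters `u` for which the affine combination
`(1-u) • y + u • x` stays in the cone `C`. -/
noncomputable def ustar {V : Type*} [NormedAddCommGroup V] [NormedSpace ℝ V]
    (C : Set V) (x y : V) : ℝ :=
  sSup {u : ℝ | (1 - u) • y + u • x ∈ C}

theorem stmt0 {V : Type*} [NormedAddCommGroup V] [NormedSpace ℝ V] [FiniteDimensional ℝ V]
    (C : Set V) (hne : C.Nonempty) (hopen : IsOpen C) (hconv : Convex ℝ C)
    (hcone : ∀ t : ℝ, 0 < t → t • C = C)
    (hproper : closure C ∩ -closure C ⊆ {0})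
    (x y : V) (hx : x ∈ C) (hy : y ∈ C)
    (hxy : x - y ∉ closure C ∪ -closure C) :
    BddAbove {u : ℝ | (1 - u) • y + u • x ∈ C} ∧
    1 < ustar C x y ∧
    ∀ β : V →L[ℝ] ℝ, (∀ v ∈ C, 0 ≤ β v) → 0 < β x →
      β y / β x ≤ ustar C x y / (ustar C x y - 1) ∧
      (0 < β ((1 - ustar C x y) • y + ustar C x y • x) →
        β y / β x < ustar C x y / (ustar C x y - 1)) := by
  set S : Set ℝ := {u : ℝ | (1 - u) • y + u • x ∈ C} with hSdef
  have h1S : (1 : ℝ) ∈ S := by simp [hSdef, hx]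
  have hSne : S.Nonempty := ⟨1, h1S⟩
  -- Bounded above
  have hbdd : BddAbove S := by
    by_contra hb
    apply hxy
    left
    rw [Metric.mem_closure_iff]
    intro ε hε
    obtain ⟨u, huS, hu⟩ := not_bddAbove_iff.mp hb (max 1 (‖y‖ / ε))
    have hu1 : 1 < u := lt_of_le_of_lt (le_max_left _ _) hu
    have hupos : 0 < u := by linarith
    have hu0 : u ≠ 0 := ne_of_gt hupos
    refine ⟨(1 / u) • ((1 - u) • y + u • x), ?_, ?_⟩
    · rw [← hcone (1 / u) (by positivity)]
      exact Set.smul_mem_smul_set huS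
    · have hkey : (1 / u) • ((1 - u) • y + u • x) = (x - y) + (1 / u) • y := by
        match_scalars <;> (field_simp; try ring)
      rw [hkey, dist_self_add_right, norm_smul]
      have hyu : ‖y‖ / ε < u := lt_of_le_of_lt (le_max_right _ _) hu
      have : ‖y‖ < u * ε := by
        rw [div_lt_iff₀ hε] at hyu; linarith
      rw [Real.norm_eq_abs, abs_of_pos (by positivity : (0:ℝ) < 1 / u)]
      rw [div_mul_eq_mul_div, one_mul, div_lt_iff₀ hupos]
      linarith
  -- sup > 1
  have hcont : Continuous fun u : ℝ => (1 - u) • y + u • x := by continuity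
  have hSopen : IsOpen S := hopen.preimage hcont
  obtain ⟨ε, hε, hball⟩ := Metric.isOpen_iff.mp hSopen 1 h1S
  have hmem : 1 + ε / 2 ∈ S := by
    apply hball
    simp only [Metric.mem_ball, Real.dist_eq]
    rw [abs_of_pos (by linarith)]
    linarith
  have hus : ustar C x y = sSup S := rfl
  have hlt : 1 < ustar C x y := by
    rw [hus]
    exact lt_of_lt_of_le (by linarith) (le_csSup hbdd hmem)
  set s := ustar C x y with hsdef
  -- boundary point in closure
  have hz : (1 - s) • y + s • x ∈ closure C := by
    rw [Metric.mem_closure_iff]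
    intro ε' hε'
    set δ := ε' / (‖x - y‖ + 1) with hδdef
    have hδ : 0 < δ := by positivity
    obtain ⟨u, huS, hu⟩ := exists_lt_of_lt_csSup hSne (show s - δ < sSup S by
      rw [← hus]; linarith)
    have hule : u ≤ s := le_of_le_of_eq (le_csSup hbdd huS) hus.symm
    refine ⟨(1 - u) • y + u • x, huS, ?_⟩
    have hdiff : ((1 - s) • y + s • x) - ((1 - u) • y + u • x) = (s - u) • (x - y) := by
      module
    rw [dist_eq_norm, hdiff, norm_smul]
    have habs : |s - u| < δ := by
      rw [abs_of_nonneg (by linarith)]; linarith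
    have h2 : |s - u| * (‖x - y‖ + 1) < δ * (‖x - y‖ + 1) :=
      mul_lt_mul_of_pos_right habs (by positivity)
    have h3 : δ * (‖x - y‖ + 1) = ε' := div_mul_cancel₀ _ (by positivity)
    have h4 : |s - u| * ‖x - y‖ ≤ |s - u| * (‖x - y‖ + 1) := by
      have := abs_nonneg (s - u)
      nlinarith
    rw [Real.norm_eq_abs]
    linarith
  refine ⟨hbdd, hlt, ?_⟩
  intro β hβ hβx
  have hβcl : ∀ v ∈ closure C, 0 ≤ β v := by
    intro v hv
    exact (closure_minimal (fun w hw => hβ w hw)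
      (isClosed_le continuous_const β.continuous)) hv
  have hβs : 0 ≤ β ((1 - s) • y + s • x) := hβcl _ hz
  have hsimp : β ((1 - s) • y + s • x) = (1 - s) * β y + s * β x := by
    simp [map_add, map_smul, smul_eq_mul]
  rw [hsimp] at hβs
  constructor
  · rw [div_le_div_iff₀ hβx (by linarith)]
    nlinarith
  · intro hpos
    rw [hsimp] at hpos
    rw [div_lt_div_iff₀ hβx (by linarith)]
    nlinarith
end

section
/- Let V be a finite-dimensional real normed vector space and let C ⊆ V be a nonempty open properly convex cone. Then the domain shape distance satisfies the triangle inequality: for all x, y, z ∈ C such that each of the differences x − y, y − z, x − z lies outside closure(C) ∪ (−closure(C)), one has d(x,z) ≤ d(x,y) + d(y,z), where d(a,b) := Real.log (u*(a,b)/(u*(a,b) − 1)) and u*(a,b) := sSup {u ∈ ℝ | (1−u)•b + u•a ∈ C}. -/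
open Pointwise

/-- The domain shape (Danciger–Stecker) distance. -/
noncomputable def dDS {V : Type*} [NormedAddCommGroup V] [NormedSpace ℝ V]
    (C : Set V) (x y : V) : ℝ :=
  Real.log (ustar C x y / (ustar C x y - 1))

open Filter Topology
section aux
variable {V : Type*} [NormedAddCommGroup V] [NormedSpace ℝ V]

variable {V : Type*} [NormedAddCommGroup V] [NormedSpace ℝ V]


lemma ustar_facts (C : Set V) (hopen : IsOpen C)
    (hcone : ∀ t : ℝ, 0 < t → t • C = C)
    (x y : V) (hx : x ∈ C) (hy : y ∈ C)
    (hxy : x - y ∉ closure C) :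
    1 < ustar C x y ∧ (1 - ustar C x y) • y + ustar C x y • x ∈ closure C ∧
      (1 - ustar C x y) • y + ustar C x y • x ∉ C := by
  set f : ℝ → V := fun u => (1 - u) • y + u • x with hf_def
  have hf : Continuous f := by fun_prop
  set S : Set ℝ := {u : ℝ | (1 - u) • y + u • x ∈ C} with hS_def
  have hSpre : S = f ⁻¹' C := rfl
  have hS1 : (1 : ℝ) ∈ S := by simp [hS_def, hx]
  have hSne : S.Nonempty := ⟨1, hS1⟩
  have hSopen : IsOpen S := hSpre ▸ hopen.preimage hf
  have hbdd : BddAbove S := by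
    by_contra h
    rw [not_bddAbove_iff] at h
    have key : ∀ n : ℕ, ∃ u, u ∈ S ∧ (n : ℝ) + 1 < u := by
      intro n
      obtain ⟨u, hu, hu'⟩ := h ((n : ℝ) + 1)
      exact ⟨u, hu, hu'⟩
    choose g hg1 hg2 using key
    have hgpos : ∀ n, 0 < g n := by
      intro n
      have h0 : (0:ℝ) < (n:ℝ) + 1 := by positivity
      linarith [hg2 n]
    have hmem : ∀ n, x - y + (g n)⁻¹ • y ∈ C := by
      intro n
      have h1 : (g n)⁻¹ • ((1 - g n) • y + g n • x) ∈ C := by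
        rw [← hcone (g n)⁻¹ (inv_pos.mpr (hgpos n))]
        exact Set.smul_mem_smul_set (hg1 n)
      have h2 : (g n)⁻¹ • ((1 - g n) • y + g n • x) = x - y + (g n)⁻¹ • y := by
        have hne : g n ≠ 0 := (hgpos n).ne'
        rw [smul_add, smul_smul, smul_smul, inv_mul_cancel₀ hne, one_smul, mul_sub, mul_one,
          inv_mul_cancel₀ hne, sub_smul, one_smul]
        abel
      rwa [h2] at h1
    have hgtop : Tendsto g atTop atTop :=
      tendsto_atTop_mono (fun n => (hg2 n).le)
        (tendsto_atTop_add_const_right _ 1 tendsto_natCast_atTop_atTop)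
    have hinv : Tendsto (fun n => (g n)⁻¹) atTop (𝓝 0) := tendsto_inv_atTop_zero.comp hgtop
    have htend : Tendsto (fun n => x - y + (g n)⁻¹ • y) atTop (𝓝 (x - y)) := by
      have := (hinv.smul_const y)
      rw [zero_smul] at this
      simpa using tendsto_const_nhds.add this
    exact hxy (mem_closure_of_tendsto htend (Filter.Eventually.of_forall hmem))
  have hU : ustar C x y = sSup S := rfl
  obtain ⟨ε, hε, hball⟩ := Metric.isOpen_iff.mp hSopen 1 hS1
  have h1lt : 1 < ustar C x y := by
    have hmem : (1 + ε / 2) ∈ S := by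
      apply hball
      rw [Metric.mem_ball, Real.dist_eq, show (1 + ε / 2 - 1) = ε / 2 by ring,
        abs_of_pos (by positivity)]
      linarith
    have := le_csSup hbdd hmem
    rw [hU]; linarith
  have hclos : f (ustar C x y) ∈ closure C := by
    rw [hU]
    have h1 : sSup S ∈ closure S := csSup_mem_closure hSne hbdd
    exact map_mem_closure hf h1 (fun u hu => hu)
  refine ⟨h1lt, hclos, ?_⟩
  intro hmem
  have hmemS : ustar C x y ∈ S := hmem
  obtain ⟨δ, hδ, hball'⟩ := Metric.isOpen_iff.mp hSopen _ hmemS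
  have : ustar C x y + δ / 2 ∈ S := by
    apply hball'
    rw [Metric.mem_ball, Real.dist_eq, show (ustar C x y + δ / 2 - ustar C x y) = δ / 2 by ring,
      abs_of_pos (by positivity)]
    linarith
  have := le_csSup hbdd this
  rw [hU] at this
  linarith

lemma ustar_le (C : Set V) (hopen : IsOpen C)
    (hcone : ∀ t : ℝ, 0 < t → t • C = C)
    (x y : V) (hx : x ∈ C) (hy : y ∈ C)
    (hxy : x - y ∉ closure C)
    (φ : V →L[ℝ] ℝ) (hφ : ∀ c ∈ closure C, 0 ≤ φ c) :
    φ y * (ustar C x y - 1) ≤ φ x * ustar C x y := by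
  obtain ⟨h1, hb, -⟩ := ustar_facts C hopen hcone x y hx hy hxy
  have h0 := hφ _ hb
  rw [map_add, map_smul, map_smul, smul_eq_mul, smul_eq_mul] at h0
  nlinarith [h0]

lemma exists_phi (C : Set V) (hopen : IsOpen C) (hconv : Convex ℝ C)
    (hcone : ∀ t : ℝ, 0 < t → t • C = C)
    (x y : V) (hx : x ∈ C) (hy : y ∈ C)
    (hxy : x - y ∉ closure C) :
    ∃ φ : V →L[ℝ] ℝ, (∀ c ∈ C, 0 < φ c) ∧
      φ y * (ustar C x y - 1) = φ x * ustar C x y := by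
  obtain ⟨h1, hbcl, hbnot⟩ := ustar_facts C hopen hcone x y hx hy hxy
  set b : V := (1 - ustar C x y) • y + ustar C x y • x with hb_def
  obtain ⟨f, hf⟩ := geometric_hahn_banach_open_point hconv hopen hbnot
  set φ : V →L[ℝ] ℝ := -f with hφ_def
  have hgt : ∀ c ∈ C, φ b < φ c := by
    intro c hc
    have := hf c hc
    simp [hφ_def]
    linarith
  have hscale : ∀ c ∈ C, ∀ t : ℝ, 0 < t → φ b < t * φ c := by
    intro c hc t ht
    have hmem : t • c ∈ C := by
      rw [← hcone t ht]; exact Set.smul_mem_smul_set hc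
    have := hgt _ hmem
    rwa [map_smul, smul_eq_mul] at this
  have hnonneg : ∀ c ∈ C, 0 ≤ φ c := by
    intro c hc
    by_contra h
    push_neg at h
    have ht : (0 : ℝ) < (min (φ b) 0 - 1) / φ c := by
      apply div_pos_of_neg_of_neg _ h
      have := min_le_right (φ b) 0
      linarith
    have h2 := hscale c hc _ ht
    rw [div_mul_cancel₀ _ h.ne] at h2
    have := min_le_left (φ b) 0
    linarith
  have hb_nonneg : 0 ≤ φ b := by
    have hsub : closure C ⊆ {v : V | 0 ≤ φ v} :=
      closure_minimal (fun c hc => hnonneg c hc)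
        (isClosed_le continuous_const φ.continuous)
    exact hsub hbcl
  have hb_nonpos : φ b ≤ 0 := by
    by_contra h
    push_neg at h
    have hxnn := hnonneg x hx
    have ht : (0 : ℝ) < φ b / (2 * (φ x + 1)) := by positivity
    have h2 := hscale x hx _ ht
    rw [div_mul_eq_mul_div] at h2
    rw [lt_div_iff₀ (by positivity)] at h2
    nlinarith
  have hb0 : φ b = 0 := le_antisymm hb_nonpos hb_nonneg
  refine ⟨φ, fun c hc => hb0 ▸ hgt c hc, ?_⟩
  have : φ b = (1 - ustar C x y) * φ y + ustar C x y * φ x := by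
    rw [hb_def, map_add, map_smul, map_smul, smul_eq_mul, smul_eq_mul]
  rw [this] at hb0
  linarith

end aux

theorem stmt1 {V : Type*} [NormedAddCommGroup V] [NormedSpace ℝ V] [FiniteDimensional ℝ V]
    (C : Set V) (hne : C.Nonempty) (hopen : IsOpen C) (hconv : Convex ℝ C)
    (hcone : ∀ t : ℝ, 0 < t → t • C = C)
    (hproper : closure C ∩ -closure C ⊆ {0})
    (x y z : V) (hx : x ∈ C) (hy : y ∈ C) (hz : z ∈ C)
    (hxy : x - y ∉ closure C ∪ -closure C)
    (hyz : y - z ∉ closure C ∪ -closure C)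
    (hxz : x - z ∉ closure C ∪ -closure C) :
    dDS C x z ≤ dDS C x y + dDS C y z := by
  have hxyC : x - y ∉ closure C := fun h => hxy (Or.inl h)
  have hyzC : y - z ∉ closure C := fun h => hyz (Or.inl h)
  have hxzC : x - z ∉ closure C := fun h => hxz (Or.inl h)
  obtain ⟨h1, -, -⟩ := ustar_facts C hopen hcone x y hx hy hxyC
  obtain ⟨h2, -, -⟩ := ustar_facts C hopen hcone y z hy hz hyzC
  obtain ⟨h3, -, -⟩ := ustar_facts C hopen hcone x z hx hz hxzC
  set u1 := ustar C x y with hu1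
  set u2 := ustar C y z with hu2
  set u3 := ustar C x z with hu3
  obtain ⟨β, hβpos, hβeq⟩ := exists_phi C hopen hconv hcone x z hx hz hxzC
  have hβcl : ∀ c ∈ closure C, 0 ≤ β c := fun c hc =>
    closure_minimal (fun v hv => (hβpos v hv).le)
      (isClosed_le continuous_const β.continuous) hc
  have B1 := ustar_le C hopen hcone x y hx hy hxyC β hβcl
  have B2 := ustar_le C hopen hcone y z hy hz hyzC β hβcl
  have bx : 0 < β x := hβpos x hx
  have hby : 0 < β y := hβpos y hy
  have bz : 0 < β z := hβpos z hz
  have e3 : u3 / (u3 - 1) = β z / β x := by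
    rw [div_eq_div_iff (by linarith) bx.ne']
    linear_combination -hβeq
  have r1 : β y / β x ≤ u1 / (u1 - 1) := by
    rw [div_le_div_iff₀ bx (by linarith)]
    linarith [B1, mul_comm (β x) u1, mul_comm u1 (β x)]
  have r2 : β z / β y ≤ u2 / (u2 - 1) := by
    rw [div_le_div_iff₀ hby (by linarith)]
    linarith [B2, mul_comm (β y) u2, mul_comm u2 (β y)]
  have hsplit : β z / β x = (β y / β x) * (β z / β y) := by
    field_simp
  have key : u3 / (u3 - 1) ≤ (u1 / (u1 - 1)) * (u2 / (u2 - 1)) := by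
    rw [e3, hsplit]
    exact mul_le_mul r1 r2 (by positivity) (div_nonneg (by linarith) (by linarith))
  have E1pos : 0 < u1 / (u1 - 1) := div_pos (by linarith) (by linarith)
  have E2pos : 0 < u2 / (u2 - 1) := div_pos (by linarith) (by linarith)
  have E3pos : 0 < u3 / (u3 - 1) := div_pos (by linarith) (by linarith)
  show Real.log (u3 / (u3 - 1)) ≤ Real.log (u1 / (u1 - 1)) + Real.log (u2 / (u2 - 1))
  rw [← Real.log_mul E1pos.ne' E2pos.ne']
  exact Real.log_le_log E3pos key
end

section
/- Let V be a finite-dimensional real normed vector space and C ⊆ V a nonempty open properly convex cone. Let x, z ∈ C with x − z ∉ closure(C) ∪ (−closure(C)), let s ∈ (0,1), and put y := (1−s)•z + s•x (so y ∈ C, and x − y, y − z also lie outside closure(C) ∪ (−closure(C))). Then the domain shape distance is additive along this projective line segment: d(x,y) + d(y,z) = d(x,z). -/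
open Pointwise

/-!
Parametrize the line through `z` and `x` by `u ↦ (1 - u) • z + u • x` and let
`u₀ = u*(x, z)` be the supremum of the parameters landing in `C`. For points `p, q` with
parameters `a < b`, the line from `p` through `q` is an increasing affine reparametrization of
this one, so `u*(q, p) = (u₀ - a) / (b - a)` and `d(q, p) = log ((u₀ - a) / (u₀ - b))`.
With parameters `0, s, 1` for `z, y, x` the claim becomes
`log ((u₀ - s) / (u₀ - 1)) + log (u₀ / (u₀ - s)) = log (u₀ / (u₀ - 1))`.
The cone property and `x - z ∉ closure C` make `u₀` finite, and openness of `C` makes `u₀ > 1`.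
-/

open Filter Topology

theorem csSup_affine_preimage {S : Set ℝ} (hne : S.Nonempty) (hbdd : BddAbove S) (a : ℝ) {t : ℝ}
    (ht : 0 < t) : sSup {u : ℝ | a + u * t ∈ S} = (sSup S - a) / t := by
  let e : ℝ ≃o ℝ := (OrderIso.mulRight₀ t ht).trans (OrderIso.addLeft a)
  have he : {u : ℝ | a + u * t ∈ S} = e.symm '' S := by
    rw [e.symm.image_eq_preimage_symm]
    rfl
  rw [he, ← e.symm.map_csSup' hne hbdd]
  simp [e, OrderIso.mulRight₀_symm, div_eq_mul_inv, neg_add_eq_sub]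

def lineParams {V : Type*} [NormedAddCommGroup V] [NormedSpace ℝ V] (C : Set V) (x z : V) :
    Set ℝ :=
  {u : ℝ | (1 - u) • z + u • x ∈ C}

section LineParams

variable {V : Type*} [NormedAddCommGroup V] [NormedSpace ℝ V] {C : Set V} {x z : V}

theorem ustar_eq_sSup_lineParams (C : Set V) (x z : V) :
    ustar C x z = sSup (lineParams C x z) :=
  rfl

theorem one_mem_lineParams (hx : x ∈ C) : (1 : ℝ) ∈ lineParams C x z := by
  simpa [lineParams] using hx

theorem bddAbove_lineParams (hcone : ∀ t : ℝ, 0 < t → t • C ⊆ C) (hxz : x - z ∉ closure C) :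
    BddAbove (lineParams C x z) := by
  by_contra hunbdd
  -- rescaling the points of the line by `w⁻¹` for large parameters `w` approaches `x - z`
  refine hxz (mem_closure_of_frequently_of_tendsto (b := atTop)
    (f := fun w : ℝ => w⁻¹ • ((1 - w) • z + w • x)) ?_ ?_)
  · refine frequently_atTop.mpr fun a => ?_
    obtain ⟨w, hw, haw⟩ := not_bddAbove_iff.mp hunbdd (max a 0)
    have hw0 : 0 < w := (le_max_right a 0).trans_lt haw
    exact ⟨w, (le_max_left a 0).trans haw.le,
      hcone _ (inv_pos.mpr hw0) (Set.smul_mem_smul_set hw)⟩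
  · have hlim : Tendsto (fun w : ℝ => w⁻¹ • z + (x - z)) atTop (𝓝 (x - z)) := by
      simpa using ((tendsto_inv_atTop_zero (𝕜 := ℝ)).smul_const z).add_const (x - z)
    refine hlim.congr' ?_
    filter_upwards [eventually_gt_atTop 0] with w hw
    match_scalars <;> field_simp
    ring

theorem one_lt_ustar (hopen : IsOpen C) (hx : x ∈ C) (hbdd : BddAbove (lineParams C x z)) :
    1 < ustar C x z := by
  have hopen' : IsOpen (lineParams C x z) := hopen.preimage (by fun_prop)
  have hnear : ∀ᶠ u in 𝓝[>] (1 : ℝ), u ∈ lineParams C x z ∧ 1 < u :=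
    (eventually_nhdsWithin_of_eventually_nhds (hopen'.mem_nhds (one_mem_lineParams hx))).and
      self_mem_nhdsWithin
  obtain ⟨u, hu, h1u⟩ := hnear.exists
  exact h1u.trans_le (le_csSup hbdd hu)

variable {a b : ℝ} {p q : V}

theorem lineParams_of_eq_affineCombination (hp : p = (1 - a) • z + a • x)
    (hq : q = (1 - b) • z + b • x) :
    lineParams C q p = {u : ℝ | a + u * (b - a) ∈ lineParams C x z} := by
  ext u
  simp only [lineParams, Set.mem_ofPred_eq, hp, hq]
  congr! 1
  module

theorem ustar_of_eq_affineCombination (hne : (lineParams C x z).Nonempty)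
    (hbdd : BddAbove (lineParams C x z)) (hab : a < b) (hp : p = (1 - a) • z + a • x)
    (hq : q = (1 - b) • z + b • x) :
    ustar C q p = (ustar C x z - a) / (b - a) := by
  rw [ustar_eq_sSup_lineParams, ustar_eq_sSup_lineParams,
    lineParams_of_eq_affineCombination hp hq, csSup_affine_preimage hne hbdd a (sub_pos.mpr hab)]

theorem dDS_of_eq_affineCombination (hne : (lineParams C x z).Nonempty)
    (hbdd : BddAbove (lineParams C x z)) (hab : a < b) (hp : p = (1 - a) • z + a • x)
    (hq : q = (1 - b) • z + b • x) :
    dDS C q p = Real.log ((ustar C x z - a) / (ustar C x z - b)) := by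
  have hba : b - a ≠ 0 := (sub_pos.mpr hab).ne'
  rw [dDS, ustar_of_eq_affineCombination hne hbdd hab hp hq, div_sub_one hba,
    div_div_div_cancel_right₀ hba, sub_sub_sub_cancel_right]

end LineParams

theorem stmt2_general {V : Type*} [NormedAddCommGroup V] [NormedSpace ℝ V]
    (C : Set V) (hopen : IsOpen C)
    (hcone : ∀ t : ℝ, 0 < t → t • C = C)
    (x z : V) (hx : x ∈ C)
    (hxz : x - z ∉ closure C ∪ -closure C)
    (s : ℝ) (hs0 : 0 < s) (hs1 : s < 1)
    (y : V) (hy : y = (1 - s) • z + s • x) :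
    dDS C x y + dDS C y z = dDS C x z := by
  have hne : (lineParams C x z).Nonempty := ⟨1, one_mem_lineParams hx⟩
  have hbdd : BddAbove (lineParams C x z) :=
    bddAbove_lineParams (fun t ht => (hcone t ht).subset) (fun h => hxz (Or.inl h))
  have hu : 1 < ustar C x z := one_lt_ustar hopen hx hbdd
  have hx' : x = (1 - 1 : ℝ) • z + (1 : ℝ) • x := by simp
  have hz' : z = (1 - 0 : ℝ) • z + (0 : ℝ) • x := by simp
  rw [dDS_of_eq_affineCombination hne hbdd hs1 hy hx',
    dDS_of_eq_affineCombination hne hbdd hs0 hz' hy,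
    dDS_of_eq_affineCombination hne hbdd zero_lt_one hz' hx',
    ← Real.log_mul (div_pos (by linarith) (by linarith)).ne'
      (div_pos (by linarith) (by linarith)).ne']
  congr 1
  field_simp [sub_ne_zero.mpr hu.ne', sub_ne_zero.mpr (hs1.trans hu).ne']

theorem stmt2 {V : Type*} [NormedAddCommGroup V] [NormedSpace ℝ V] [FiniteDimensional ℝ V]
    (C : Set V) (hne : C.Nonempty) (hopen : IsOpen C) (hconv : Convex ℝ C)
    (hcone : ∀ t : ℝ, 0 < t → t • C = C)
    (hproper : closure C ∩ -closure C ⊆ {0})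
    (x z : V) (hx : x ∈ C) (hz : z ∈ C)
    (hxz : x - z ∉ closure C ∪ -closure C)
    (s : ℝ) (hs0 : 0 < s) (hs1 : s < 1)
    (y : V) (hy : y = (1 - s) • z + s • x) :
    dDS C x y + dDS C y z = dDS C x z :=
  stmt2_general C hopen hcone x z hx hxz s hs0 hs1 y hy
end

section
/- Let V be a finite-dimensional real normed vector space and C ⊆ V a nonempty open properly convex cone which is in addition strictly convex, meaning that for any linearly independent a, b ∈ closure(C) ∖ {0} and any t ∈ (0,1), the point (1−t)•a + t•b lies in C. If x, y, z ∈ C are linearly independent and each of the differences x − y, y − z, x − z lies outside closure(C) ∪ (−closure(C)), then the triangle inequality for the domain shape distance is strict: d(x,z) < d(x,y) + d(y,z). -/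
open Pointwise

/-- Basic properties of `ustar`: it is `> 1`, the corresponding point lies in the
closure of `C` but not in `C`. -/
lemma ustar_props {V : Type*} [NormedAddCommGroup V] [NormedSpace ℝ V]
    (C : Set V) (hopen : IsOpen C)
    (hcone : ∀ t : ℝ, 0 < t → t • C = C)
    (x y : V) (hx : x ∈ C) (hy : y ∈ C) (hxy : x - y ∉ closure C) :
    1 < ustar C x y ∧ (1 - ustar C x y) • y + ustar C x y • x ∈ closure C ∧
      (1 - ustar C x y) • y + ustar C x y • x ∉ C := by
  set S := {u : ℝ | (1 - u) • y + u • x ∈ C} with hS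
  have h1S : (1 : ℝ) ∈ S := by
    show (1 - (1:ℝ)) • y + (1:ℝ) • x ∈ C
    simpa using hx
  have hSne : S.Nonempty := ⟨1, h1S⟩
  have hbdd : BddAbove S := by
    by_contra hb
    have h' : ∀ n : ℕ, ∃ u, u ∈ S ∧ (n : ℝ) < u := by
      intro n
      rcases not_bddAbove_iff.mp hb (n : ℝ) with ⟨u, huS, hnu⟩
      exact ⟨u, huS, hnu⟩
    choose u huS hun using h'
    have hupos : ∀ n, 0 < u n := fun n => lt_of_le_of_lt (Nat.cast_nonneg n) (hun n)
    have hmem : ∀ n, x + ((u n)⁻¹ - 1) • y ∈ C := by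
      intro n
      have h0 : (u n)⁻¹ • ((1 - u n) • y + u n • x) ∈ C := by
        rw [← hcone (u n)⁻¹ (inv_pos.mpr (hupos n))]
        exact Set.smul_mem_smul_set (huS n)
      have hne : u n ≠ 0 := (hupos n).ne'
      have heq : (u n)⁻¹ • ((1 - u n) • y + u n • x) = x + ((u n)⁻¹ - 1) • y := by
        rw [smul_add, smul_smul, smul_smul, inv_mul_cancel₀ hne, one_smul,
          show (u n)⁻¹ * (1 - u n) = (u n)⁻¹ - 1 by field_simp]
        exact add_comm _ _
      rwa [heq] at h0
    have htop : Filter.Tendsto u Filter.atTop Filter.atTop :=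
      Filter.tendsto_atTop_mono (fun n => (hun n).le) tendsto_natCast_atTop_atTop
    have hinv : Filter.Tendsto (fun n => (u n)⁻¹) Filter.atTop (nhds 0) :=
      Filter.Tendsto.comp tendsto_inv_atTop_zero htop
    have hlim : Filter.Tendsto (fun n => x + ((u n)⁻¹ - 1) • y) Filter.atTop (nhds (x - y)) := by
      have h1 : Filter.Tendsto (fun n => ((u n)⁻¹ - 1)) Filter.atTop (nhds (0 - 1)) :=
        hinv.sub_const 1
      have h2 := (h1.smul_const y).const_add x
      have : x + ((0:ℝ) - 1) • y = x - y := by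
        simp [sub_smul, sub_eq_add_neg]
      rwa [this] at h2
    exact hxy (mem_closure_of_tendsto hlim (Filter.Eventually.of_forall hmem))
  have hcont : Continuous fun u : ℝ => (1 - u) • y + u • x := by
    apply Continuous.add
    · exact (continuous_const.sub continuous_id).smul continuous_const
    · exact continuous_id.smul continuous_const
  have hopenS : IsOpen S := hopen.preimage hcont
  obtain ⟨ε, hε, hball⟩ := Metric.isOpen_iff.mp hopenS 1 h1S
  have hmem1 : 1 + ε / 2 ∈ S := by
    apply hball
    simp only [Metric.mem_ball, Real.dist_eq]
    rw [show (1 + ε/2 - 1) = ε/2 by ring, abs_of_pos (by linarith)]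
    linarith
  have hu_eq : ustar C x y = sSup S := rfl
  have hlt : 1 < ustar C x y := by
    rw [hu_eq]
    have := le_csSup hbdd hmem1
    linarith
  have hclS : sSup S ∈ closure S := csSup_mem_closure hSne hbdd
  have hmemcl : (1 - ustar C x y) • y + ustar C x y • x ∈ closure C := by
    rw [hu_eq]
    have h := map_mem_closure (t := C) hcont hclS (fun u hu => hu)
    exact h
  refine ⟨hlt, hmemcl, ?_⟩
  intro hmem
  obtain ⟨δ, hδ, hballδ⟩ := Metric.isOpen_iff.mp hopenS (ustar C x y) hmem
  have hmemδ : ustar C x y + δ / 2 ∈ S := by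
    apply hballδ
    simp only [Metric.mem_ball, Real.dist_eq]
    rw [show (ustar C x y + δ/2 - ustar C x y) = δ/2 by ring, abs_of_pos (by linarith)]
    linarith
  have := le_csSup hbdd hmemδ
  rw [← hu_eq] at this
  linarith

theorem stmt3 {V : Type*} [NormedAddCommGroup V] [NormedSpace ℝ V] [FiniteDimensional ℝ V]
    (C : Set V) (hne : C.Nonempty) (hopen : IsOpen C) (hconv : Convex ℝ C)
    (hcone : ∀ t : ℝ, 0 < t → t • C = C)
    (hproper : closure C ∩ -closure C ⊆ {0})
    (hstrict : ∀ a b : V, a ∈ closure C \ {0} → b ∈ closure C \ {0} →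
      LinearIndependent ℝ ![a, b] → ∀ t : ℝ, 0 < t → t < 1 → (1 - t) • a + t • b ∈ C)
    (x y z : V) (hx : x ∈ C) (hy : y ∈ C) (hz : z ∈ C)
    (hind : LinearIndependent ℝ ![x, y, z])
    (hxy : x - y ∉ closure C ∪ -closure C)
    (hyz : y - z ∉ closure C ∪ -closure C)
    (hxz : x - z ∉ closure C ∪ -closure C) :
    dDS C x z < dDS C x y + dDS C y z := by
  have hxyC : x - y ∉ closure C := fun h => hxy (Set.mem_union_left _ h)
  have hyzC : y - z ∉ closure C := fun h => hyz (Set.mem_union_left _ h)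
  have hxzC : x - z ∉ closure C := fun h => hxz (Set.mem_union_left _ h)
  obtain ⟨hu1, hp1cl, -⟩ := ustar_props C hopen hcone x y hx hy hxyC
  obtain ⟨hu2, hp2cl, -⟩ := ustar_props C hopen hcone y z hy hz hyzC
  obtain ⟨hu3, hp3cl, hp3nC⟩ := ustar_props C hopen hcone x z hx hz hxzC
  set u1 := ustar C x y with hu1def
  set u2 := ustar C y z with hu2def
  set u3 := ustar C x z with hu3def
  set p1 := (1 - u1) • y + u1 • x with hp1def
  set p2 := (1 - u2) • z + u2 • y with hp2def
  set p3 := (1 - u3) • z + u3 • x with hp3def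
  -- coefficient extraction from linear independence
  have hcoef : ∀ a b c : ℝ, a • x + b • y + c • z = 0 → a = 0 ∧ b = 0 ∧ c = 0 := by
    intro a b c habc
    have h := Fintype.linearIndependent_iff.mp hind ![a, b, c]
      (by simpa [Fin.sum_univ_three] using habc)
    exact ⟨h 0, h 1, h 2⟩
  have hp1ne : p1 ≠ 0 := by
    intro h
    have := hcoef u1 (1 - u1) 0 (by rw [zero_smul, add_zero, add_comm, ← hp1def, h])
    linarith [this.1]
  have hp2ne : p2 ≠ 0 := by
    intro h
    have := hcoef 0 u2 (1 - u2) (by rw [zero_smul, zero_add, add_comm, ← hp2def, h])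
    linarith [this.2.1]
  have hindep : LinearIndependent ℝ ![p1, p2] := by
    rw [LinearIndependent.pair_iff]
    intro s t hst
    have hexp : (s * u1) • x + (s * (1 - u1) + t * u2) • y + (t * (1 - u2)) • z = 0 := by
      rw [← hst, hp1def, hp2def]
      module
    obtain ⟨h1, h2, h3⟩ := hcoef _ _ _ hexp
    have hs : s = 0 := by
      rcases mul_eq_zero.mp h1 with h | h
      · exact h
      · linarith
    have ht : t = 0 := by
      rcases mul_eq_zero.mp h3 with h | h
      · exact h
      · linarith
    exact ⟨hs, ht⟩
  -- supporting functional at p3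
  obtain ⟨f, hf⟩ := geometric_hahn_banach_open_point hconv hopen hp3nC
  -- f ≤ 0 on C
  have hle : ∀ a ∈ C, f a ≤ 0 := by
    intro a ha
    by_contra h
    push_neg at h
    have ht : (0:ℝ) < (|f p3| + 1) / f a := div_pos (by positivity) h
    have hmem : ((|f p3| + 1) / f a) • a ∈ C := by
      rw [← hcone _ ht]
      exact Set.smul_mem_smul_set ha
    have := hf _ hmem
    rw [map_smul, smul_eq_mul, div_mul_cancel₀ _ h.ne'] at this
    linarith [le_abs_self (f p3)]
  have hclle : ∀ v ∈ closure C, f v ≤ 0 := by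
    intro v hv
    have hsub : C ⊆ {w | f w ≤ 0} := hle
    have : closure C ⊆ {w | f w ≤ 0} :=
      closure_minimal hsub (isClosed_le f.continuous continuous_const)
    exact this hv
  have hp3le : f p3 ≤ 0 := hclle p3 hp3cl
  have hneg : ∀ a ∈ C, f a < 0 := fun a ha => lt_of_lt_of_le (hf a ha) hp3le
  have hp3ge : 0 ≤ f p3 := by
    by_contra h
    push_neg at h
    have hfx : f x < 0 := hneg x hx
    have ht : (0:ℝ) < f p3 / (2 * f x) := div_pos_of_neg_of_neg h (by linarith)
    have hmem : (f p3 / (2 * f x)) • x ∈ C := by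
      rw [← hcone _ ht]
      exact Set.smul_mem_smul_set hx
    have := hf _ hmem
    rw [map_smul, smul_eq_mul] at this
    have heq : f p3 / (2 * f x) * f x = f p3 / 2 := by
      rw [div_mul_eq_mul_div, mul_comm 2 (f x), mul_comm (f p3) (f x),
        mul_div_mul_left _ _ hfx.ne]
    rw [heq] at this
    linarith
  have hp3eq : f p3 = 0 := le_antisymm hp3le hp3ge
  -- expansions
  have e1 : f p1 = (1 - u1) * f y + u1 * f x := by
    rw [hp1def, map_add, map_smul, map_smul, smul_eq_mul, smul_eq_mul]
  have e2 : f p2 = (1 - u2) * f z + u2 * f y := by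
    rw [hp2def, map_add, map_smul, map_smul, smul_eq_mul, smul_eq_mul]
  have e3 : f p3 = (1 - u3) * f z + u3 * f x := by
    rw [hp3def, map_add, map_smul, map_smul, smul_eq_mul, smul_eq_mul]
  have hfx : f x < 0 := hneg x hx
  have hfy : f y < 0 := hneg y hy
  have hfz : f z < 0 := hneg z hz
  have hfp1 : f p1 ≤ 0 := hclle p1 hp1cl
  have hfp2 : f p2 ≤ 0 := hclle p2 hp2cl
  -- one of the inequalities is strict
  have hdisj : f p1 < 0 ∨ f p2 < 0 := by
    by_contra h
    push_neg at h
    have h1 : f p1 = 0 := le_antisymm hfp1 h.1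
    have h2 : f p2 = 0 := le_antisymm hfp2 h.2
    have hmid : (1 - (1/2 : ℝ)) • p1 + (1/2 : ℝ) • p2 ∈ C :=
      hstrict p1 p2 ⟨hp1cl, by simpa using hp1ne⟩ ⟨hp2cl, by simpa using hp2ne⟩
        hindep (1/2) (by norm_num) (by norm_num)
    have := hneg _ hmid
    rw [map_add, map_smul, map_smul, smul_eq_mul, smul_eq_mul, h1, h2] at this
    norm_num at this
  -- arithmetic
  show Real.log (u3 / (u3 - 1)) < Real.log (u1 / (u1 - 1)) + Real.log (u2 / (u2 - 1))
  have hr1 : (0:ℝ) < u1 / (u1 - 1) := div_pos (by linarith) (by linarith)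
  have hr2 : (0:ℝ) < u2 / (u2 - 1) := div_pos (by linarith) (by linarith)
  have hr3 : (0:ℝ) < u3 / (u3 - 1) := div_pos (by linarith) (by linarith)
  rw [← Real.log_mul hr1.ne' hr2.ne']
  apply Real.log_lt_log hr3
  rw [div_mul_div_comm, div_lt_div_iff₀ (by linarith) (mul_pos (by linarith : (0:ℝ) < u1 - 1) (by linarith : (0:ℝ) < u2 - 1))]
  -- goal: u3 * ((u1 - 1) * (u2 - 1)) < u1 * u2 * (u3 - 1)
  set A : ℝ := -f x with hA
  set B : ℝ := -f y with hB
  set Cc : ℝ := -f z with hCc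
  have hApos : 0 < A := by simp [hA]; linarith
  have hBpos : 0 < B := by simp [hB]; linarith
  have hCpos : 0 < Cc := by simp [hCc]; linarith
  have h3' : u3 * A = (u3 - 1) * Cc := by
    have := hp3eq
    rw [e3] at this
    have hfzA : f z = -Cc := by simp [hCc]
    have hfxA : f x = -A := by simp [hA]
    rw [hfzA, hfxA] at this
    linear_combination -this
  have h1' : (u1 - 1) * B ≤ u1 * A := by
    have := hfp1
    rw [e1] at this
    have hfyA : f y = -B := by simp [hB]
    have hfxA : f x = -A := by simp [hA]
    rw [hfyA, hfxA] at this
    linarith [this]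
  have h2' : (u2 - 1) * Cc ≤ u2 * B := by
    have := hfp2
    rw [e2] at this
    have hfzA : f z = -Cc := by simp [hCc]
    have hfyA : f y = -B := by simp [hB]
    rw [hfzA, hfyA] at this
    linarith [this]
  have hkey : Cc * ((u1 - 1) * (u2 - 1)) < u1 * u2 * A := by
    rcases hdisj with h | h
    · -- strict in pair (x, y)
      have h1s : (u1 - 1) * B < u1 * A := by
        rw [e1] at h
        have hfyA : f y = -B := by simp [hB]
        have hfxA : f x = -A := by simp [hA]
        rw [hfyA, hfxA] at h
        linarith [h]
      linarith [mul_le_mul_of_nonneg_left h2' (show (0:ℝ) ≤ u1 - 1 by linarith),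
        mul_lt_mul_of_pos_left h1s (show (0:ℝ) < u2 by linarith), hBpos, hCpos]
    · -- strict in pair (y, z)
      have h2s : (u2 - 1) * Cc < u2 * B := by
        rw [e2] at h
        have hfzA : f z = -Cc := by simp [hCc]
        have hfyA : f y = -B := by simp [hB]
        rw [hfzA, hfyA] at h
        linarith [h]
      linarith [mul_lt_mul_of_pos_left h2s (show (0:ℝ) < u1 - 1 by linarith),
        mul_le_mul_of_nonneg_left h1' (show (0:ℝ) ≤ u2 by linarith), hBpos, hCpos]
  -- conclude
  have hfinal := mul_lt_mul_of_pos_left hkey (show (0:ℝ) < u3 - 1 by linarith)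
  -- (u3-1) * (Cc * ((u1-1)*(u2-1))) < (u3-1) * (u1*u2*A)
  -- and u3*A = (u3-1)*Cc, so LHS = u3*A*((u1-1)*(u2-1))
  have hL : (u3 - 1) * (Cc * ((u1 - 1) * (u2 - 1))) = u3 * ((u1 - 1) * (u2 - 1)) * A := by
    linear_combination (-(u1 - 1) * (u2 - 1)) * h3'
  have hAcancel : u3 * ((u1 - 1) * (u2 - 1)) * A < u1 * u2 * (u3 - 1) * A := by
    calc u3 * ((u1 - 1) * (u2 - 1)) * A = (u3 - 1) * (Cc * ((u1 - 1) * (u2 - 1))) := hL.symm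
      _ < (u3 - 1) * (u1 * u2 * A) := hfinal
      _ = u1 * u2 * (u3 - 1) * A := by ring
  exact lt_of_mul_lt_mul_right hAcancel hApos.le
end

section
/- Let E be a finite-dimensional real normed vector space, n ∈ ℕ, and let x : ℝⁿ → E and α : ℝⁿ → (E →L[ℝ] ℝ) be twice continuously differentiable maps satisfying, for all u ∈ ℝⁿ and w ∈ ℝⁿ: α(u)(x(u)) = 1, α(u)(Dx(u)(w)) = 0, and (Dα(u)(w))(x(u)) = 0, where D denotes the Fréchet derivative. Then for all u, w₁, w₂ ∈ ℝⁿ: −(Dα(u)(w₁))(Dx(u)(w₂)) = α(u)(D²x(u)(w₁,w₂)) = (D²α(u)(w₁,w₂))(x(u)), where D² denotes the second (bilinear) Fréchet derivative; in particular the bilinear form g_u(w₁,w₂) := −(Dα(u)(w₁))(Dx(u)(w₂)) is symmetric in w₁ and w₂. -/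
/-!
Differentiating the identities `α(u)(Dx(u) w₂) = 0` and `Dα(u)(w₂)(x(u)) = 0` in the direction
`w₁` by the Leibniz rule expresses `α(u)(D²x(u)(w₁,w₂))` and `D²α(u)(w₁,w₂)(x(u))` through the
mixed terms `Dα(u)(w₁)(Dx(u) w₂)` and `Dα(u)(w₂)(Dx(u) w₁)`. Since `D²α(u)` is symmetric (`α` is
`C²`), the two mixed terms agree, which gives all three equalities.
-/

section Leibniz

variable {𝕜 U E F : Type*} [NontriviallyNormedField 𝕜]
  [NormedAddCommGroup U] [NormedSpace 𝕜 U] [NormedAddCommGroup E] [NormedSpace 𝕜 E]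
  [NormedAddCommGroup F] [NormedSpace 𝕜 F] {c : U → E →L[𝕜] F} {u : U}

theorem fderiv_clm_apply_const_apply (hc : DifferentiableAt 𝕜 c u) (e : E) (w : U) :
    fderiv 𝕜 (fun y ↦ c y e) u w = fderiv 𝕜 c u w e := by
  simp [fderiv_clm_apply hc (differentiableAt_const e)]

theorem fderiv_apply_add_apply_fderiv_eq_zero {v : U → E} {k : F} (hc : DifferentiableAt 𝕜 c u)
    (hv : DifferentiableAt 𝕜 v u) (h : ∀ y, c y (v y) = k) (w : U) :
    fderiv 𝕜 c u w (v u) + c u (fderiv 𝕜 v u w) = 0 := by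
  have hderiv := fderiv_clm_apply hc hv
  rw [show (fun y ↦ c y (v y)) = fun _ ↦ k from funext h, fderiv_const_apply] at hderiv
  simpa [add_comm] using (congrArg (· w) hderiv).symm

end Leibniz

theorem stmt4_general {E : Type*} [NormedAddCommGroup E] [NormedSpace ℝ E]
    (n : ℕ) (x : (Fin n → ℝ) → E) (α : (Fin n → ℝ) → (E →L[ℝ] ℝ))
    (hx : ContDiff ℝ 2 x) (hα : ContDiff ℝ 2 α)
    (htanS : ∀ u w, α u (fderiv ℝ x u w) = 0)
    (htanS' : ∀ u w, (fderiv ℝ α u w) (x u) = 0) :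
    ∀ u w₁ w₂ : Fin n → ℝ,
      -((fderiv ℝ α u w₁) (fderiv ℝ x u w₂)) = α u ((fderiv ℝ (fderiv ℝ x) u w₁) w₂) ∧
      α u ((fderiv ℝ (fderiv ℝ x) u w₁) w₂) = ((fderiv ℝ (fderiv ℝ α) u w₁) w₂) (x u) ∧
      -((fderiv ℝ α u w₁) (fderiv ℝ x u w₂)) = -((fderiv ℝ α u w₂) (fderiv ℝ x u w₁)) := by
  intro u w₁ w₂
  have hxd : Differentiable ℝ x := hx.differentiable (by norm_num)
  have hαd : Differentiable ℝ α := hα.differentiable (by norm_num)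
  have hxd2 : Differentiable ℝ (fderiv ℝ x) :=
    (hx.fderiv_right (m := 1) (by norm_num)).differentiable one_ne_zero
  have hαd2 : Differentiable ℝ (fderiv ℝ α) :=
    (hα.fderiv_right (m := 1) (by norm_num)).differentiable one_ne_zero
  have hdtanS : ∀ w₁ w₂,
      fderiv ℝ α u w₁ (fderiv ℝ x u w₂) + α u (fderiv ℝ (fderiv ℝ x) u w₁ w₂) = 0 := by
    intro w₁ w₂
    simpa only [fderiv_clm_apply_const_apply (hxd2 u)] using
      fderiv_apply_add_apply_fderiv_eq_zero (hαd u)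
        ((hxd2 u).clm_apply (differentiableAt_const w₂)) (fun y ↦ htanS y w₂) w₁
  have hdtanS' : ∀ w₁ w₂,
      fderiv ℝ (fderiv ℝ α) u w₁ w₂ (x u) + fderiv ℝ α u w₂ (fderiv ℝ x u w₁) = 0 := by
    intro w₁ w₂
    simpa only [fderiv_clm_apply_const_apply (hαd2 u)] using
      fderiv_apply_add_apply_fderiv_eq_zero ((hαd2 u).clm_apply (differentiableAt_const w₂))
        (hxd u) (fun y ↦ htanS' y w₂) w₁
  have hsymm : fderiv ℝ (fderiv ℝ α) u w₁ w₂ = fderiv ℝ (fderiv ℝ α) u w₂ w₁ :=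
    hα.contDiffAt.isSymmSndFDerivAt (by simp) w₁ w₂
  have h₁ := hdtanS w₁ w₂
  have h₂ := hdtanS' w₁ w₂
  have h₃ := hdtanS' w₂ w₁
  rw [← hsymm] at h₃
  exact ⟨by linarith, by linarith, by linarith⟩

theorem stmt4 {E : Type*} [NormedAddCommGroup E] [NormedSpace ℝ E] [FiniteDimensional ℝ E]
    (n : ℕ) (x : (Fin n → ℝ) → E) (α : (Fin n → ℝ) → (E →L[ℝ] ℝ))
    (hx : ContDiff ℝ 2 x) (hα : ContDiff ℝ 2 α)
    (hdual : ∀ u, α u (x u) = 1)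
    (htanS : ∀ u w, α u (fderiv ℝ x u w) = 0)
    (htanS' : ∀ u w, (fderiv ℝ α u w) (x u) = 0) :
    ∀ u w₁ w₂ : Fin n → ℝ,
      -((fderiv ℝ α u w₁) (fderiv ℝ x u w₂)) = α u ((fderiv ℝ (fderiv ℝ x) u w₁) w₂) ∧
      α u ((fderiv ℝ (fderiv ℝ x) u w₁) w₂) = ((fderiv ℝ (fderiv ℝ α) u w₁) w₂) (x u) ∧
      -((fderiv ℝ α u w₁) (fderiv ℝ x u w₂)) = -((fderiv ℝ α u w₂) (fderiv ℝ x u w₁)) :=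
  stmt4_general n x α hx hα htanS htanS'
end

section
/- Let φ : ℂ → ℝ be twice continuously differentiable and let μ₀ : ℂ → ℂ be holomorphic (complex differentiable on all of ℂ). Define A₁, A₂ : ℂ → Matrix (Fin 3) (Fin 3) ℂ by A₁(z) = [[∂_zφ(z), 0, 1], [e^{−φ(z)}μ₀(z), 0, 0], [0, e^{φ(z)}, 0]] and A₂(z) = [[0, e^{−φ(z)}·conj(μ₀(z)), 0], [0, ∂_z̄φ(z), 1], [e^{φ(z)}, 0, 0]]. Then the zero-curvature equation ∂_zA₂(z) − ∂_z̄A₁(z) + A₁(z)·A₂(z) − A₂(z)·A₁(z) = 0 holds for all z ∈ ℂ if and only if φ satisfies Wang's equation ∂_z∂_z̄φ(z) = e^{φ(z)} − e^{−2φ(z)}·|μ₀(z)|² for all z ∈ ℂ (equivalently, (1/4)Δφ = e^{φ} − e^{−2φ}|μ₀|², with Δ the Euclidean Laplacian on ℂ ≅ ℝ²). -/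
/-- Wirtinger derivative `∂_z f` of a map `f : ℂ → ℂ`, via the real Fréchet derivative. -/
noncomputable def wirtZ (f : ℂ → ℂ) (p : ℂ) : ℂ :=
  (1 / 2) * (fderiv ℝ f p 1 - Complex.I * fderiv ℝ f p Complex.I)

/-- Conjugate Wirtinger derivative `∂_z̄ f` of a map `f : ℂ → ℂ`. -/
noncomputable def wirtZbar (f : ℂ → ℂ) (p : ℂ) : ℂ :=
  (1 / 2) * (fderiv ℝ f p 1 + Complex.I * fderiv ℝ f p Complex.I)

/-- Entrywise Wirtinger derivative `∂_z A` of a matrix-valued map. -/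
noncomputable def wirtZMat (A : ℂ → Matrix (Fin 3) (Fin 3) ℂ) (p : ℂ) :
    Matrix (Fin 3) (Fin 3) ℂ :=
  Matrix.of fun i j => wirtZ (fun w => A w i j) p

/-- Entrywise conjugate Wirtinger derivative `∂_z̄ A` of a matrix-valued map. -/
noncomputable def wirtZbarMat (A : ℂ → Matrix (Fin 3) (Fin 3) ℂ) (p : ℂ) :
    Matrix (Fin 3) (Fin 3) ℂ :=
  Matrix.of fun i j => wirtZbar (fun w => A w i j) p

/-- The `dz`-part of the affine sphere connection form. -/
noncomputable def affA1 (φ : ℂ → ℝ) (μ₀ : ℂ → ℂ) (z : ℂ) : Matrix (Fin 3) (Fin 3) ℂ :=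
  !![wirtZ (fun w => (φ w : ℂ)) z, 0, 1;
     (Real.exp (-φ z) : ℂ) * μ₀ z, 0, 0;
     0, (Real.exp (φ z) : ℂ), 0]

/-- The `dz̄`-part of the affine sphere connection form. -/
noncomputable def affA2 (φ : ℂ → ℝ) (μ₀ : ℂ → ℂ) (z : ℂ) : Matrix (Fin 3) (Fin 3) ℂ :=
  !![0, (Real.exp (-φ z) : ℂ) * (starRingEnd ℂ) (μ₀ z), 0;
     0, wirtZbar (fun w => (φ w : ℂ)) z, 1;
     (Real.exp (φ z) : ℂ), 0, 0]

/-!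
Entrywise, the curvature matrix is computed with the Leibniz and chain rules for the Wirtinger
derivatives. Holomorphy of `μ₀` kills `∂_z̄ μ₀` and `∂_z conj μ₀`, and the derivatives of the
factors `e^{±φ}` cancel against the `∂φ` entries, so every off-diagonal entry vanishes and the
`(2,2)`-entry is zero. The `(1,1)`-entry is `∂_z ∂_z̄ φ - e^φ + e^{-2φ}|μ₀|²`, and since `φ` is
real-valued the `(0,0)`-entry is minus its complex conjugate (no symmetry of second derivatives
is needed). Hence the curvature vanishes exactly where Wang's equation holds.
-/

open ComplexConjugate

section Wirtinger

variable {f g : ℂ → ℂ} {p : ℂ}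

theorem wirtZ_const (c p : ℂ) : wirtZ (fun _ => c) p = 0 := by
  simp [wirtZ]

theorem wirtZbar_const (c p : ℂ) : wirtZbar (fun _ => c) p = 0 := by
  simp [wirtZbar]

theorem wirtZ_mul (hf : DifferentiableAt ℝ f p) (hg : DifferentiableAt ℝ g p) :
    wirtZ (fun w => f w * g w) p = wirtZ f p * g p + f p * wirtZ g p := by
  simp only [wirtZ, fderiv_fun_mul hf hg, add_apply, smul_apply, smul_eq_mul]
  ring

theorem wirtZbar_mul (hf : DifferentiableAt ℝ f p) (hg : DifferentiableAt ℝ g p) :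
    wirtZbar (fun w => f w * g w) p = wirtZbar f p * g p + f p * wirtZbar g p := by
  simp only [wirtZbar, fderiv_fun_mul hf hg, add_apply, smul_apply, smul_eq_mul]
  ring

theorem fderiv_conj_comp (f : ℂ → ℂ) (p : ℂ) :
    fderiv ℝ (fun w => conj (f w)) p = (Complex.conjCLE : ℂ →L[ℝ] ℂ).comp (fderiv ℝ f p) :=
  Complex.conjCLE.comp_fderiv

theorem wirtZ_conj (f : ℂ → ℂ) (p : ℂ) :
    wirtZ (fun w => conj (f w)) p = conj (wirtZbar f p) := by
  simp only [wirtZ, wirtZbar, fderiv_conj_comp, ContinuousLinearMap.coe_comp,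
    Function.comp_apply, ContinuousLinearEquiv.coe_coe, Complex.conjCLE_apply, map_mul,
    map_add, map_div₀, map_one, map_ofNat, Complex.conj_I]
  ring

theorem wirtZbar_conj (f : ℂ → ℂ) (p : ℂ) :
    wirtZbar (fun w => conj (f w)) p = conj (wirtZ f p) := by
  simp only [wirtZ, wirtZbar, fderiv_conj_comp, ContinuousLinearMap.coe_comp,
    Function.comp_apply, ContinuousLinearEquiv.coe_coe, Complex.conjCLE_apply, map_mul,
    map_sub, map_div₀, map_one, map_ofNat, Complex.conj_I]
  ring

theorem wirtZbar_eq_zero_of_differentiableAt (hf : DifferentiableAt ℂ f p) :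
    wirtZbar f p = 0 := by
  have hI : fderiv ℂ f p Complex.I = Complex.I * fderiv ℂ f p 1 := by simp
  rw [wirtZbar, (hf.hasFDerivAt.restrictScalars ℝ).fderiv,
    ContinuousLinearMap.coe_restrictScalars', hI, ← mul_assoc, Complex.I_mul_I]
  ring

theorem wirtZbar_ofReal_eq_conj (g : ℂ → ℝ) (p : ℂ) :
    wirtZbar (fun w => (g w : ℂ)) p = conj (wirtZ (fun w => (g w : ℂ)) p) := by
  simpa only [Complex.conj_ofReal] using wirtZbar_conj (fun w => (g w : ℂ)) p

theorem wirtZ_ofReal_comp {h : ℝ → ℝ} {h' : ℝ} {g : ℂ → ℝ} (hh : HasDerivAt h h' (g p))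
    (hg : DifferentiableAt ℝ g p) :
    wirtZ (fun w => (h (g w) : ℂ)) p = h' * wirtZ (fun w => (g w : ℂ)) p := by
  have hcomp := Complex.ofRealCLM.hasFDerivAt.comp p (hh.hasFDerivAt.comp p hg.hasFDerivAt)
  have hg' := Complex.ofRealCLM.hasFDerivAt.comp p hg.hasFDerivAt
  simp only [wirtZ]
  rw [show (fun w => (h (g w) : ℂ)) = Complex.ofRealCLM ∘ h ∘ g from rfl, hcomp.fderiv,
    show (fun w => (g w : ℂ)) = Complex.ofRealCLM ∘ g from rfl, hg'.fderiv]
  simp only [ContinuousLinearMap.comp_apply, ContinuousLinearMap.toSpanSingleton_apply,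
    smul_eq_mul, Complex.ofRealCLM_apply, Complex.ofReal_mul]
  ring

theorem wirtZbar_ofReal_comp {h : ℝ → ℝ} {h' : ℝ} {g : ℂ → ℝ} (hh : HasDerivAt h h' (g p))
    (hg : DifferentiableAt ℝ g p) :
    wirtZbar (fun w => (h (g w) : ℂ)) p = h' * wirtZbar (fun w => (g w : ℂ)) p := by
  rw [wirtZbar_ofReal_eq_conj, wirtZbar_ofReal_eq_conj, wirtZ_ofReal_comp hh hg, map_mul,
    Complex.conj_ofReal]

end Wirtinger

section AffineSphere

variable {φ : ℂ → ℝ} {μ₀ : ℂ → ℂ} {z : ℂ}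

noncomputable def wangDefect (φ : ℂ → ℝ) (μ₀ : ℂ → ℂ) (z : ℂ) : ℂ :=
  wirtZ (fun w => wirtZbar (fun p => (φ p : ℂ)) w) z -
    ((Real.exp (φ z) : ℂ) - (Real.exp (-2 * φ z) : ℂ) * ((‖μ₀ z‖ : ℂ)) ^ 2)

theorem wirtZbar_wirtZ_ofReal (φ : ℂ → ℝ) (z : ℂ) :
    wirtZbar (fun w => wirtZ (fun p => (φ p : ℂ)) w) z =
      conj (wirtZ (fun w => wirtZbar (fun p => (φ p : ℂ)) w) z) := by
  have h : (fun w => wirtZbar (fun p => (φ p : ℂ)) w) =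
      fun w => conj (wirtZ (fun p => (φ p : ℂ)) w) :=
    funext fun w => wirtZbar_ofReal_eq_conj φ w
  rw [h, wirtZ_conj, Complex.conj_conj]

theorem wirtZ_exp_neg_mul_conj (hφ : DifferentiableAt ℝ φ z) (hμ₀ : DifferentiableAt ℂ μ₀ z) :
    wirtZ (fun w => (Real.exp (-φ w) : ℂ) * conj (μ₀ w)) z =
      -wirtZ (fun w => (φ w : ℂ)) z * Real.exp (-φ z) * conj (μ₀ z) := by
  have hexp : DifferentiableAt ℝ (fun w => (Real.exp (-φ w) : ℂ)) z := by fun_prop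
  have hconj : DifferentiableAt ℝ (fun w => conj (μ₀ w)) z :=
    Complex.conjCLE.differentiableAt.comp z (hμ₀.restrictScalars ℝ)
  rw [wirtZ_mul hexp hconj, wirtZ_ofReal_comp (hasDerivAt_neg (φ z)).exp hφ, wirtZ_conj,
    wirtZbar_eq_zero_of_differentiableAt hμ₀, map_zero]
  push_cast
  ring

theorem wirtZbar_exp_neg_mul (hφ : DifferentiableAt ℝ φ z) (hμ₀ : DifferentiableAt ℂ μ₀ z) :
    wirtZbar (fun w => (Real.exp (-φ w) : ℂ) * μ₀ w) z =
      -wirtZbar (fun w => (φ w : ℂ)) z * Real.exp (-φ z) * μ₀ z := by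
  have hexp : DifferentiableAt ℝ (fun w => (Real.exp (-φ w) : ℂ)) z := by fun_prop
  rw [wirtZbar_mul hexp (hμ₀.restrictScalars ℝ),
    wirtZbar_ofReal_comp (hasDerivAt_neg (φ z)).exp hφ, wirtZbar_eq_zero_of_differentiableAt hμ₀]
  push_cast
  ring

theorem exp_neg_mul_self_mul_conj (φ : ℝ) (μ : ℂ) :
    (Real.exp (-φ) : ℂ) * μ * ((Real.exp (-φ) : ℂ) * conj μ) =
      (Real.exp (-2 * φ) : ℂ) * (‖μ‖ : ℂ) ^ 2 := by
  rw [mul_mul_mul_comm, Complex.mul_conj, Complex.normSq_eq_norm_sq, ← Complex.ofReal_mul,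
    ← Real.exp_add]
  push_cast
  ring_nf

theorem affA_zeroCurvature_eq (hφ : DifferentiableAt ℝ φ z) (hμ₀ : DifferentiableAt ℂ μ₀ z) :
    wirtZMat (affA2 φ μ₀) z - wirtZbarMat (affA1 φ μ₀) z +
        affA1 φ μ₀ z * affA2 φ μ₀ z - affA2 φ μ₀ z * affA1 φ μ₀ z =
      !![-conj (wangDefect φ μ₀ z), 0, 0; 0, wangDefect φ μ₀ z, 0; 0, 0, 0] := by
  have hnorm := exp_neg_mul_self_mul_conj (φ z) (μ₀ z)
  ext i j
  fin_cases i <;> fin_cases j <;>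
    simp only [wirtZMat, wirtZbarMat, affA1, affA2, Matrix.of_apply, Matrix.sub_apply,
      Matrix.add_apply, Matrix.mul_apply, Fin.sum_univ_three, Fin.isValue, Fin.reduceFinMk,
      Matrix.cons_val', Matrix.cons_val_zero, Matrix.cons_val_one, Matrix.head_cons,
      Matrix.cons_val_two, Matrix.tail_cons, Matrix.head_fin_const, Matrix.empty_val',
      Matrix.cons_val_fin_one, wirtZ_const, wirtZbar_const, wirtZ_exp_neg_mul_conj hφ hμ₀,
      wirtZbar_exp_neg_mul hφ hμ₀, wirtZ_ofReal_comp (Real.hasDerivAt_exp (φ z)) hφ,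
      wirtZbar_ofReal_comp (Real.hasDerivAt_exp (φ z)) hφ, wirtZbar_wirtZ_ofReal, wangDefect,
      map_sub, map_mul, map_pow, Complex.conj_ofReal]
  · linear_combination -hnorm
  · ring
  · ring
  · ring
  · linear_combination hnorm
  · ring
  · ring
  · ring
  · ring

end AffineSphere

theorem neg_conj_diag_eq_zero_iff (e : ℂ) :
    !![-conj e, 0, 0; 0, e, 0; 0, 0, 0] = 0 ↔ e = 0 := by
  refine ⟨fun h => by simpa using congrFun (congrFun h 1) 1, ?_⟩
  rintro rfl
  ext i j
  fin_cases i <;> fin_cases j <;> simp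

theorem stmt5 (φ : ℂ → ℝ) (hφ : ContDiff ℝ 2 φ)
    (μ₀ : ℂ → ℂ) (hμ₀ : Differentiable ℂ μ₀) :
    (∀ z : ℂ,
        wirtZMat (affA2 φ μ₀) z - wirtZbarMat (affA1 φ μ₀) z +
          affA1 φ μ₀ z * affA2 φ μ₀ z - affA2 φ μ₀ z * affA1 φ μ₀ z = 0) ↔
    (∀ z : ℂ,
        wirtZ (fun w => wirtZbar (fun p => (φ p : ℂ)) w) z =
          (Real.exp (φ z) : ℂ) -
            (Real.exp (-2 * φ z) : ℂ) * ((‖μ₀ z‖ : ℂ)) ^ 2) := by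
  have hφ' : Differentiable ℝ φ := hφ.differentiable (by norm_num)
  refine forall_congr' fun z => ?_
  rw [affA_zeroCurvature_eq (hφ' z) (hμ₀ z), neg_conj_diag_eq_zero_iff, wangDefect, sub_eq_zero]
end

section
/- Let x ∈ ℝ² (the Euclidean plane, EuclideanSpace ℝ (Fin 2)), R > 0, and let u be a real-valued function that is twice continuously differentiable on a neighborhood of the closed ball B̄(x,R). Then the gradient of u at x satisfies ‖∇u(x)‖ ≤ R · (sup_{y ∈ B̄(x,R)} |Δu(y)|) + (4/(π·R)) · (sup_{y : ‖y − x‖ = R} |u(y)|), where Δu denotes the Euclidean Laplacian (sum of the two pure second partial derivatives) and the second supremum is over the boundary circle. -/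
/-- The Euclidean Laplacian on `ℝ²`: the sum of the two pure second partial derivatives. -/
noncomputable def lap2 (u : EuclideanSpace ℝ (Fin 2) → ℝ) (y : EuclideanSpace ℝ (Fin 2)) : ℝ :=
  ∑ i : Fin 2,
    fderiv ℝ (fun z => fderiv ℝ u z (EuclideanSpace.single i 1)) y (EuclideanSpace.single i 1)

/-!
Fix a unit vector `v`, write `e θ` for `v` rotated by `θ`, and consider the cosine coefficients
`f s = ∫ u (x + s • e θ) cos θ dθ` and `h s = ∫ Δu (x + s • e θ) cos θ dθ` over `[0, 2π]`.
Splitting `Δu` into radial and angular second derivatives and integrating the angular one by parts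
twice in `θ` gives the Bessel equation `s² h = s² f'' + s f' - f`, with `f 0 = 0` and
`f' 0 = π ∂ᵥu(x)`. Integrated against `1 - s²/R²` (that is, against `s ds dθ` times
`(1/s - s/R²) cos θ`, which is `-2π` times the derivative at the centre of the Green's function
of the disk) it yields
`2π ∂ᵥu(x) = 2 f(R) / R - ∫₀ᴿ (1 - s²/R²) h(s) ds`.
The bound follows from `∫₀^{2π} |cos θ| dθ = 4`, so that `|f R| ≤ 4 sup |u|` on the circle and
`|h| ≤ 4 sup |Δu|` on the disk.
-/

open Real Set Filter Topology MeasureTheory intervalIntegral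

theorem integral_deriv2_add_mul_cos_eq_zero {g g' g'' : ℝ → ℝ}
    (hg : ∀ θ, HasDerivAt g (g' θ) θ) (hg' : ∀ θ, HasDerivAt g' (g'' θ) θ)
    (hg'' : Continuous g'') (hper : g (2 * π) = g 0) (hper' : g' (2 * π) = g' 0) :
    ∫ θ in (0)..(2 * π), (g'' θ + g θ) * cos θ = 0 := by
  have hderiv : ∀ θ, HasDerivAt (fun θ => g' θ * cos θ + g θ * sin θ)
      ((g'' θ + g θ) * cos θ) θ := fun θ =>
    (((hg' θ).mul (hasDerivAt_cos θ)).add ((hg θ).mul (hasDerivAt_sin θ))).congr_deriv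
      (by ring)
  have hcont : Continuous g := continuous_iff_continuousAt.2 fun θ => (hg θ).continuousAt
  rw [integral_eq_sub_of_hasDerivAt (fun θ _ => hderiv θ)
    ((by fun_prop : Continuous fun θ => (g'' θ + g θ) * cos θ).intervalIntegrable _ _)]
  simp [hper, hper']

theorem integral_abs_cos_zero_two_pi : ∫ θ in (0)..(2 * π), |cos θ| = 4 := by
  have hper : Function.Periodic (fun θ => |cos θ|) π := fun θ => by simp [cos_add_pi]
  have hint : ∀ a b : ℝ, IntervalIntegrable (fun θ => |cos θ|) volume a b :=
    fun a b => continuous_cos.abs.intervalIntegrable a b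
  have half : ∫ θ in (-(π / 2))..(π / 2), |cos θ| = 2 := by
    rw [integral_congr fun θ hθ => abs_of_nonneg (cos_nonneg_of_mem_Icc ?_), integral_cos]
    · norm_num
    · rwa [uIcc_of_le (by linarith [pi_pos])] at hθ
  calc ∫ θ in (0)..(2 * π), |cos θ|
      = (∫ θ in (0)..(0 + π), |cos θ|) + ∫ θ in π..(π + π), |cos θ| := by
        rw [zero_add, integral_add_adjacent_intervals (hint _ _) (hint _ _), two_mul]
    _ = 4 := by
        rw [hper.intervalIntegral_add_eq 0 (-(π / 2)), hper.intervalIntegral_add_eq π (-(π / 2)),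
          show -(π / 2) + π = π / 2 by ring, half]
        norm_num

theorem abs_one_sub_sq_div_sq_le_one {s R : ℝ} (hs : 0 ≤ s) (hsR : s ≤ R) :
    |1 - s ^ 2 / R ^ 2| ≤ 1 := by
  have h₁ : 0 ≤ s ^ 2 / R ^ 2 := by positivity
  have h₂ : s ^ 2 / R ^ 2 ≤ 1 := div_le_one_of_le₀ (pow_le_pow_left₀ hs hsR 2) (sq_nonneg R)
  rw [abs_le]
  constructor <;> linarith

theorem integral_one_sub_sq_div_sq_mul_eq_of_bessel {f f' f'' h : ℝ → ℝ} {R : ℝ}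
    (hR : 0 < R) (hf0 : f 0 = 0) (hf : ∀ s ∈ Icc 0 R, HasDerivAt f (f' s) s)
    (hf' : ∀ s ∈ Icc 0 R, HasDerivAt f' (f'' s) s) (hh : ContinuousOn h (Icc 0 R))
    (heq : ∀ s ∈ Ioo 0 R, s ^ 2 * h s = s ^ 2 * f'' s + s * f' s - f s) :
    ∫ s in (0)..R, (1 - s ^ 2 / R ^ 2) * h s = 2 * f R / R - 2 * f' 0 := by
  have hslope : ∀ s ≠ 0, dslope f 0 s = f s / s := fun s hs => by
    rw [dslope_of_ne _ hs, slope_def_field, hf0, sub_zero, sub_zero]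
  -- a primitive of the integrand, made continuous at `0` (where `f s / s` is singular) by `dslope`
  set F : ℝ → ℝ := fun s => (1 - s ^ 2 / R ^ 2) * (f' s - dslope f 0 s) + 2 * dslope f 0 s
  have hF0 : F 0 = 2 * f' 0 := by
    simp [F, (hf 0 (left_mem_Icc.2 hR.le)).deriv]
  have hFR : F R = 2 * f R / R := by
    simp only [F, hslope R hR.ne', div_self (pow_ne_zero 2 hR.ne')]
    ring
  have hdslope : ContinuousOn (dslope f 0) (Icc 0 R) := fun s hs => by
    rcases eq_or_ne s 0 with rfl | hs0
    · exact (continuousAt_dslope_same.2 (hf 0 hs).differentiableAt).continuousWithinAt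
    · exact (continuousWithinAt_dslope_of_ne hs0).2 (hf s hs).continuousAt.continuousWithinAt
  have hweight : ContinuousOn (fun s : ℝ => 1 - s ^ 2 / R ^ 2) (Icc 0 R) := by fun_prop
  have hFc : ContinuousOn F (Icc 0 R) := by
    have hf'c : ContinuousOn f' (Icc 0 R) := fun s hs =>
      (hf' s hs).continuousAt.continuousWithinAt
    exact (hweight.mul (hf'c.sub hdslope)).add (continuousOn_const.mul hdslope)
  have hFd : ∀ s ∈ Ioo 0 R, HasDerivAt F ((1 - s ^ 2 / R ^ 2) * h s) s := by
    intro s hs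
    have hs0 : s ≠ 0 := hs.1.ne'
    have hsI : s ∈ Icc 0 R := Ioo_subset_Icc_self hs
    have hquot : HasDerivAt (dslope f 0) ((f' s * s - f s * 1) / s ^ 2) s :=
      ((hf s hsI).div (hasDerivAt_id s) hs0).congr_of_eventuallyEq
        (by filter_upwards [isOpen_ne.mem_nhds hs0] with t ht using hslope t ht)
    have hw : HasDerivAt (fun s : ℝ => 1 - s ^ 2 / R ^ 2) (-(2 * s / R ^ 2)) s := by
      simpa using ((hasDerivAt_pow 2 s).div_const (R ^ 2)).const_sub 1
    have hhs : h s = f'' s + f' s / s - f s / s ^ 2 := by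
      field_simp
      linear_combination heq s hs
    refine ((hw.mul ((hf' s hsI).sub hquot)).add (hquot.const_mul 2)).congr_deriv ?_
    rw [Pi.sub_apply, hslope s hs0, hhs]
    field_simp
    ring
  rw [integral_eq_sub_of_hasDerivAt_of_le hR.le hFc hFd
    ((hweight.mul hh).intervalIntegrable_of_Icc hR.le), hFR, hF0]

section ParametricIntegral

variable {E : Type*} [NormedAddCommGroup E] {V : Set ℝ} {a b s₀ : ℝ}

theorem ContinuousOn.continuous_of_mem_prod_univ {G : ℝ → ℝ → E}
    (hG : ContinuousOn (Function.uncurry G) (V ×ˢ univ)) {s : ℝ} (hs : s ∈ V) :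
    Continuous (G s) :=
  hG.comp_continuous (Continuous.prodMk_right s) fun θ => ⟨hs, mem_univ θ⟩

theorem exists_bound_eventually_of_continuousOn {G : ℝ → ℝ → E} (hV : IsOpen V)
    (hs₀ : s₀ ∈ V) (hG : ContinuousOn (Function.uncurry G) (V ×ˢ univ)) :
    ∃ C, ∀ᶠ s in 𝓝 s₀, ∀ θ ∈ uIcc a b, ‖G s θ‖ ≤ C := by
  obtain ⟨ε, hε, hball⟩ := Metric.nhds_basis_closedBall.mem_iff.1 (hV.mem_nhds hs₀)
  obtain ⟨C, hC⟩ := ((isCompact_closedBall s₀ ε).prod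
    isCompact_uIcc).exists_bound_of_continuousOn (hG.mono (prod_mono hball (subset_univ _)))
  exact ⟨C, eventually_of_mem (Metric.closedBall_mem_nhds s₀ hε) fun s hs θ hθ =>
    hC (s, θ) ⟨hs, hθ⟩⟩

variable [NormedSpace ℝ E]

theorem continuousOn_intervalIntegral_of_continuousOn {G : ℝ → ℝ → E} (hV : IsOpen V)
    (hG : ContinuousOn (Function.uncurry G) (V ×ˢ univ)) :
    ContinuousOn (fun s => ∫ θ in a..b, G s θ) V := by
  intro s₀ hs₀
  obtain ⟨C, hC⟩ := exists_bound_eventually_of_continuousOn (a := a) (b := b) hV hs₀ hG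
  refine (continuousAt_of_dominated_interval (bound := fun _ => C) ?_ ?_
    intervalIntegrable_const ?_).continuousWithinAt
  · filter_upwards [hV.mem_nhds hs₀] with s hs using
      (hG.continuous_of_mem_prod_univ hs).aestronglyMeasurable
  · filter_upwards [hC] with s hs using ae_of_all _ fun θ hθ => hs θ (uIoc_subset_uIcc hθ)
  · refine ae_of_all _ fun θ _ => ?_
    exact (hG.continuousAt (prod_mem_nhds (hV.mem_nhds hs₀) univ_mem)).comp
      (f := fun s => (s, θ)) (Continuous.prodMk_left θ).continuousAt

theorem hasDerivAt_intervalIntegral_of_continuousOn {F F' : ℝ → ℝ → E} (hV : IsOpen V)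
    (hs₀ : s₀ ∈ V) (hF : ∀ s ∈ V, Continuous (F s))
    (hF' : ContinuousOn (Function.uncurry F') (V ×ˢ univ))
    (hdiff : ∀ s ∈ V, ∀ θ, HasDerivAt (F · θ) (F' s θ) s) :
    HasDerivAt (fun s => ∫ θ in a..b, F s θ) (∫ θ in a..b, F' s₀ θ) s₀ := by
  obtain ⟨C, hC⟩ := exists_bound_eventually_of_continuousOn (a := a) (b := b) hV hs₀ hF'
  refine (hasDerivAt_integral_of_dominated_loc_of_deriv_le (bound := fun _ => C)
    (inter_mem hC (hV.mem_nhds hs₀)) ?_ ((hF s₀ hs₀).intervalIntegrable _ _)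
    (hF'.continuous_of_mem_prod_univ hs₀).aestronglyMeasurable ?_ intervalIntegrable_const ?_).2
  · filter_upwards [hV.mem_nhds hs₀] with s hs using (hF s hs).aestronglyMeasurable
  · exact ae_of_all _ fun θ hθ s hs => hs.1 θ (uIoc_subset_uIcc hθ)
  · exact ae_of_all _ fun θ _ s hs => hdiff s hs.2 θ

end ParametricIntegral

section SecondDerivative

variable {E F : Type*} [NormedAddCommGroup E] [NormedSpace ℝ E] [NormedAddCommGroup F]
  [NormedSpace ℝ F] {u : E → F} {U : Set E} {y : E}

theorem ContDiffOn.hasFDerivAt_of_isOpen (hu : ContDiffOn ℝ 2 u U) (hU : IsOpen U)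
    (hy : y ∈ U) : HasFDerivAt u (fderiv ℝ u y) y :=
  ((hu.differentiableOn (by norm_num)).differentiableAt (hU.mem_nhds hy)).hasFDerivAt

theorem ContDiffOn.hasFDerivAt_fderiv_of_isOpen (hu : ContDiffOn ℝ 2 u U) (hU : IsOpen U)
    (hy : y ∈ U) : HasFDerivAt (fderiv ℝ u) (fderiv ℝ (fderiv ℝ u) y) y :=
  (((hu.fderiv_of_isOpen hU (m := 1) (by norm_num)).differentiableOn one_ne_zero).differentiableAt
    (hU.mem_nhds hy)).hasFDerivAt

theorem ContDiffOn.continuousOn_fderiv_fderiv_of_isOpen (hu : ContDiffOn ℝ 2 u U)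
    (hU : IsOpen U) : ContinuousOn (fderiv ℝ (fderiv ℝ u)) U :=
  (hu.fderiv_of_isOpen hU (by norm_num)).continuousOn_fderiv_of_isOpen hU le_rfl

theorem ContDiffOn.hasDerivAt_comp_of_isOpen (hu : ContDiffOn ℝ 2 u U) (hU : IsOpen U)
    {c : ℝ → E} {c' : E} {t : ℝ} (hc : HasDerivAt c c' t) (ht : c t ∈ U) :
    HasDerivAt (fun t => u (c t)) (fderiv ℝ u (c t) c') t :=
  (hu.hasFDerivAt_of_isOpen hU ht).comp_hasDerivAt t hc

theorem ContDiffOn.hasDerivAt_fderiv_comp_of_isOpen (hu : ContDiffOn ℝ 2 u U) (hU : IsOpen U)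
    {c d : ℝ → E} {c' d' : E} {t : ℝ} (hc : HasDerivAt c c' t) (hd : HasDerivAt d d' t)
    (ht : c t ∈ U) :
    HasDerivAt (fun t => fderiv ℝ u (c t) (d t))
      (fderiv ℝ (fderiv ℝ u) (c t) c' (d t) + fderiv ℝ u (c t) d') t :=
  ((hu.hasFDerivAt_fderiv_of_isOpen hU ht).comp_hasDerivAt t hc).clm_apply hd

theorem ContinuousLinearMap.apply_add_apply_rotate (T : E →L[ℝ] E →L[ℝ] ℝ) (p q : E)
    (a b : ℝ) :
    T (a • p + b • q) (a • p + b • q) + T (-b • p + a • q) (-b • p + a • q)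
      = (a ^ 2 + b ^ 2) * (T p p + T q q) := by
  simp only [map_add, map_smul, add_apply, smul_apply, smul_eq_mul]
  ring

end SecondDerivative

namespace Plane

local notation "E²" => EuclideanSpace ℝ (Fin 2)

noncomputable def perp (v : E²) : E² := !₂[-v 1, v 0]

noncomputable def rotate (θ : ℝ) (v : E²) : E² := cos θ • v + sin θ • perp v

@[simp] theorem perp_apply_zero (v : E²) : perp v 0 = -v 1 := rfl

@[simp] theorem perp_apply_one (v : E²) : perp v 1 = v 0 := rfl

theorem eq_single_add_single (v : E²) :
    v = v 0 • EuclideanSpace.single 0 1 + v 1 • EuclideanSpace.single 1 1 := by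
  ext i; fin_cases i <;> simp

theorem perp_eq_single_add_single (v : E²) :
    perp v = -v 1 • EuclideanSpace.single 0 1 + v 0 • EuclideanSpace.single 1 1 := by
  ext i; fin_cases i <;> simp

theorem norm_sq_eq (v : E²) : ‖v‖ ^ 2 = v 0 ^ 2 + v 1 ^ 2 := by
  simp [EuclideanSpace.norm_sq_eq, Fin.sum_univ_two]

theorem perp_rotate (θ : ℝ) (v : E²) : perp (rotate θ v) = rotate θ (perp v) := by
  ext i; fin_cases i <;> simp [rotate, add_comm]

theorem rotate_neg (θ : ℝ) (v : E²) : rotate θ (-v) = -rotate θ v := by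
  ext i; fin_cases i <;> simp [rotate] <;> ring

theorem perp_perp (v : E²) : perp (perp v) = -v := by
  ext i; fin_cases i <;> simp

theorem norm_rotate (θ : ℝ) (v : E²) : ‖rotate θ v‖ = ‖v‖ := by
  rw [← sq_eq_sq₀ (norm_nonneg _) (norm_nonneg _), norm_sq_eq, norm_sq_eq]
  simp only [rotate, PiLp.add_apply, PiLp.smul_apply, smul_eq_mul, perp_apply_zero,
    perp_apply_one]
  linear_combination (v 0 ^ 2 + v 1 ^ 2) * sin_sq_add_cos_sq θ

@[simp] theorem rotate_zero (v : E²) : rotate 0 v = v := by simp [rotate]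

@[simp] theorem rotate_two_pi (v : E²) : rotate (2 * π) v = v := by simp [rotate]

theorem hasDerivAt_rotate (θ : ℝ) (v : E²) :
    HasDerivAt (rotate · v) (rotate θ (perp v)) θ := by
  have h := ((hasDerivAt_cos θ).smul_const v).add ((hasDerivAt_sin θ).smul_const (perp v))
  rw [rotate, perp_perp]
  exact h.congr_deriv (by module)

variable {u : E² → ℝ} {U : Set E²} {x y v : E²} {ρ : ℝ}

theorem lap2_eq_fderiv_fderiv (hu : ContDiffOn ℝ 2 u U) (hU : IsOpen U) (hy : y ∈ U) :
    lap2 u y = fderiv ℝ (fderiv ℝ u) y (EuclideanSpace.single 0 1) (EuclideanSpace.single 0 1)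
      + fderiv ℝ (fderiv ℝ u) y (EuclideanSpace.single 1 1) (EuclideanSpace.single 1 1) := by
  have hpartial (v : E²) :
      fderiv ℝ (fun z => fderiv ℝ u z v) y v = fderiv ℝ (fderiv ℝ u) y v v :=
    congrArg (· v) ((hu.hasFDerivAt_fderiv_of_isOpen hU hy).clm_apply
      (hasFDerivAt_const v y)).fderiv |>.trans (by simp)
  simp only [lap2, Fin.sum_univ_two, hpartial]

theorem lap2_eq_of_norm_eq_one (hu : ContDiffOn ℝ 2 u U) (hU : IsOpen U) (hy : y ∈ U) {z : E²}
    (hz : ‖z‖ = 1) :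
    lap2 u y = fderiv ℝ (fderiv ℝ u) y z z + fderiv ℝ (fderiv ℝ u) y (perp z) (perp z) := by
  have h := (fderiv ℝ (fderiv ℝ u) y).apply_add_apply_rotate (EuclideanSpace.single 0 1)
    (EuclideanSpace.single 1 1) (z 0) (z 1)
  rw [← eq_single_add_single, ← perp_eq_single_add_single, ← norm_sq_eq, hz] at h
  rw [h, lap2_eq_fderiv_fderiv hu hU hy]
  ring

@[fun_prop] theorem continuous_perp : Continuous perp := by
  unfold perp; fun_prop

@[fun_prop] theorem continuous_rotate (v : E²) : Continuous (rotate · v) := by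
  unfold rotate; fun_prop

-- The direction argument of `G` lets one definition cover `u`, its first and second derivatives
-- along `rotate θ v`, and `Δu`.
noncomputable def cosCoeff (G : E² → E² → ℝ) (x v : E²) (s : ℝ) : ℝ :=
  ∫ θ in (0)..(2 * π), G (x + s • rotate θ v) (rotate θ v) * cos θ

theorem norm_smul_rotate (hv : ‖v‖ = 1) (s θ : ℝ) : ‖s • rotate θ v‖ = |s| := by
  rw [norm_smul, norm_rotate, hv, mul_one, Real.norm_eq_abs]

theorem add_smul_rotate_mem_ball (hv : ‖v‖ = 1) {s : ℝ} (hs : s ∈ Ioo (-ρ) ρ) (θ : ℝ) :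
    x + s • rotate θ v ∈ Metric.ball x ρ := by
  rw [Metric.mem_ball, dist_self_add_left, norm_smul_rotate hv]
  exact abs_lt.2 hs

theorem continuousOn_uncurry_cosCoeff_integrand {G : E² → E² → ℝ} (hv : ‖v‖ = 1)
    (hG : ContinuousOn (Function.uncurry G) (Metric.ball x ρ ×ˢ univ)) :
    ContinuousOn (Function.uncurry fun s θ => G (x + s • rotate θ v) (rotate θ v) * cos θ)
      (Ioo (-ρ) ρ ×ˢ univ) := by
  refine ContinuousOn.mul ?_ (by fun_prop)
  exact hG.comp (f := fun p : ℝ × ℝ => (x + p.1 • rotate p.2 v, rotate p.2 v))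
    (Continuous.continuousOn (by fun_prop))
    fun p hp => ⟨add_smul_rotate_mem_ball hv hp.1 p.2, mem_univ _⟩

theorem continuousOn_cosCoeff {G : E² → E² → ℝ} (hv : ‖v‖ = 1)
    (hG : ContinuousOn (Function.uncurry G) (Metric.ball x ρ ×ˢ univ)) :
    ContinuousOn (cosCoeff G x v) (Ioo (-ρ) ρ) :=
  continuousOn_intervalIntegral_of_continuousOn isOpen_Ioo
    (continuousOn_uncurry_cosCoeff_integrand hv hG)

theorem hasDerivAt_cosCoeff {G G' : E² → E² → ℝ} (hv : ‖v‖ = 1)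
    (hG : ContinuousOn (Function.uncurry G) (Metric.ball x ρ ×ˢ univ))
    (hG' : ContinuousOn (Function.uncurry G') (Metric.ball x ρ ×ˢ univ))
    (hdir : ∀ y ∈ Metric.ball x ρ, ∀ e,
      HasDerivAt (fun t : ℝ => G (y + t • e) e) (G' y e) 0)
    {s : ℝ} (hs : s ∈ Ioo (-ρ) ρ) :
    HasDerivAt (cosCoeff G x v) (cosCoeff G' x v s) s := by
  refine hasDerivAt_intervalIntegral_of_continuousOn isOpen_Ioo hs
    (fun s hs => (continuousOn_uncurry_cosCoeff_integrand hv hG).continuous_of_mem_prod_univ hs)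
    (continuousOn_uncurry_cosCoeff_integrand hv hG') fun s hs θ => ?_
  have hray := hdir _ (add_smul_rotate_mem_ball hv hs θ) (rotate θ v)
  rw [← sub_self s] at hray
  replace hray := hray.comp_sub_const s s
  refine (hray.congr_of_eventuallyEq (Eventually.of_forall fun t => ?_)).mul_const (cos θ)
  simp only
  congr 1
  module

theorem abs_cosCoeff_le {G : E² → E² → ℝ} {s B : ℝ}
    (hG : Continuous fun θ => G (x + s • rotate θ v) (rotate θ v))
    (hB : ∀ θ, |G (x + s • rotate θ v) (rotate θ v)| ≤ B) :
    |cosCoeff G x v s| ≤ 4 * B := by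
  calc |cosCoeff G x v s|
      ≤ ∫ θ in (0)..(2 * π), |G (x + s • rotate θ v) (rotate θ v) * cos θ| :=
        abs_integral_le_integral_abs (by positivity)
    _ ≤ ∫ θ in (0)..(2 * π), B * |cos θ| := by
        refine integral_mono_on (by positivity) ((hG.mul continuous_cos).abs.intervalIntegrable _ _)
          ((continuous_const.mul continuous_cos.abs).intervalIntegrable _ _) fun θ _ => ?_
        rw [abs_mul]
        exact mul_le_mul_of_nonneg_right (hB θ) (abs_nonneg _)
    _ = 4 * B := by rw [intervalIntegral.integral_const_mul, integral_abs_cos_zero_two_pi, mul_comm]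

theorem cosCoeff_zero {g : E² → ℝ} : cosCoeff (fun y _ => g y) x v 0 = 0 := by
  simp [cosCoeff, integral_cos]

theorem integral_apply_rotate_mul_cos (L : E² →L[ℝ] ℝ) (v : E²) :
    ∫ θ in (0)..(2 * π), L (rotate θ v) * cos θ = π * L v := by
  have hexp (θ : ℝ) :
      L (rotate θ v) * cos θ = L v * cos θ ^ 2 + L (perp v) * (sin θ * cos θ) := by
    simp only [rotate, map_add, map_smul, smul_eq_mul]
    ring
  simp_rw [hexp]
  rw [intervalIntegral.integral_add ((by fun_prop : Continuous _).intervalIntegrable _ _)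
    ((by fun_prop : Continuous _).intervalIntegrable _ _), intervalIntegral.integral_const_mul,
    intervalIntegral.integral_const_mul,
    integral_cos_sq, integral_sin_mul_cos₁]
  simp only [cos_two_pi, sin_two_pi, cos_zero, sin_zero]
  ring

theorem _root_.ContDiffOn.continuousOn_lap2 (hu : ContDiffOn ℝ 2 u U) (hU : IsOpen U) :
    ContinuousOn (lap2 u) U := by
  have hD2 := hu.continuousOn_fderiv_fderiv_of_isOpen hU
  refine ContinuousOn.congr ?_ fun y hy => lap2_eq_fderiv_fderiv hu hU hy
  exact ((hD2.clm_apply continuousOn_const).clm_apply continuousOn_const).add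
    ((hD2.clm_apply continuousOn_const).clm_apply continuousOn_const)

theorem _root_.ContDiffOn.continuousOn_uncurry_fderiv_apply (hu : ContDiffOn ℝ 2 u U)
    (hU : IsOpen U) : ContinuousOn (Function.uncurry fun y e => fderiv ℝ u y e) (U ×ˢ univ) :=
  ((hu.continuousOn_fderiv_of_isOpen hU (by norm_num)).comp continuousOn_fst
    fun _ hp => hp.1).clm_apply continuousOn_snd

theorem _root_.ContDiffOn.continuousOn_uncurry_fderiv_fderiv_apply (hu : ContDiffOn ℝ 2 u U)
    (hU : IsOpen U) :
    ContinuousOn (Function.uncurry fun y e => fderiv ℝ (fderiv ℝ u) y e e) (U ×ˢ univ) :=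
  (((hu.continuousOn_fderiv_fderiv_of_isOpen hU).comp continuousOn_fst
    fun _ hp => hp.1).clm_apply continuousOn_snd).clm_apply continuousOn_snd

theorem continuous_cosCoeff_integrand {G : E² → E² → ℝ} (hv : ‖v‖ = 1)
    (hρ : Metric.ball x ρ ⊆ U) (hG : ContinuousOn (Function.uncurry G) (U ×ˢ univ)) {s : ℝ}
    (hs : s ∈ Ioo (-ρ) ρ) :
    Continuous fun θ => G (x + s • rotate θ v) (rotate θ v) * cos θ :=
  (continuousOn_uncurry_cosCoeff_integrand hv
    (hG.mono (prod_mono hρ subset_rfl))).continuous_of_mem_prod_univ hs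

theorem cosCoeff_lap2 (hu : ContDiffOn ℝ 2 u U) (hU : IsOpen U) (hv : ‖v‖ = 1)
    (hρ : Metric.ball x ρ ⊆ U) {s : ℝ} (hs : s ∈ Ioo (-ρ) ρ) :
    cosCoeff (fun y _ => lap2 u y) x v s
      = cosCoeff (fun y e => fderiv ℝ (fderiv ℝ u) y e e) x v s
        + cosCoeff (fun y e => fderiv ℝ (fderiv ℝ u) y (perp e) (perp e)) x v s := by
  have hD2 := hu.continuousOn_uncurry_fderiv_fderiv_apply hU
  have hD2perp : ContinuousOn
      (Function.uncurry fun y e => fderiv ℝ (fderiv ℝ u) y (perp e) (perp e)) (U ×ˢ univ) :=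
    hD2.comp (f := fun p : E² × E² => (p.1, perp p.2)) (by fun_prop)
      fun _ hp => ⟨hp.1, mem_univ _⟩
  rw [cosCoeff, cosCoeff, cosCoeff, ← intervalIntegral.integral_add
    ((continuous_cosCoeff_integrand hv hρ hD2 hs).intervalIntegrable _ _)
    ((continuous_cosCoeff_integrand hv hρ hD2perp hs).intervalIntegrable _ _)]
  refine intervalIntegral.integral_congr fun θ _ => ?_
  rw [lap2_eq_of_norm_eq_one hu hU (hρ (add_smul_rotate_mem_ball hv hs θ)) (z := rotate θ v)
    (by rw [norm_rotate, hv]), add_mul]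

-- With `γ θ = x + s • rotate θ v` and `e = rotate θ v`,
-- `(u ∘ γ)'' = s² ∂²u(perp e, perp e) - s ∂u(e)`; integrate by parts twice against `cos`.
theorem sq_mul_cosCoeff_fderiv_fderiv_perp (hu : ContDiffOn ℝ 2 u U) (hU : IsOpen U)
    (hv : ‖v‖ = 1) (hρ : Metric.ball x ρ ⊆ U) {s : ℝ} (hs : s ∈ Ioo (-ρ) ρ) :
    s ^ 2 * cosCoeff (fun y e => fderiv ℝ (fderiv ℝ u) y (perp e) (perp e)) x v s
      = s * cosCoeff (fun y e => fderiv ℝ u y e) x v s - cosCoeff (fun y _ => u y) x v s := by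
  set γ : ℝ → E² := fun θ => x + s • rotate θ v
  have hγU (θ : ℝ) : γ θ ∈ U := hρ (add_smul_rotate_mem_ball hv hs θ)
  have hγ (θ : ℝ) : HasDerivAt γ (s • rotate θ (perp v)) θ :=
    ((hasDerivAt_rotate θ v).const_smul s).const_add x
  have hγ' (θ : ℝ) :
      HasDerivAt (fun θ => s • rotate θ (perp v)) (s • rotate θ (perp (perp v))) θ :=
    (hasDerivAt_rotate θ (perp v)).const_smul s
  set g'' : ℝ → ℝ := fun θ => fderiv ℝ (fderiv ℝ u) (γ θ) (s • rotate θ (perp v))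
      (s • rotate θ (perp v)) + fderiv ℝ u (γ θ) (s • rotate θ (perp (perp v)))
  have hγc : Continuous γ := by fun_prop
  have hg''c : Continuous g'' :=
    ((((hu.continuousOn_fderiv_fderiv_of_isOpen hU).comp_continuous hγc hγU).clm_apply
      (by fun_prop)).clm_apply (by fun_prop)).add
      (((hu.continuousOn_fderiv_of_isOpen hU (by norm_num)).comp_continuous hγc hγU).clm_apply
      (by fun_prop))
  have hperiodic := integral_deriv2_add_mul_cos_eq_zero
    (fun θ => hu.hasDerivAt_comp_of_isOpen hU (hγ θ) (hγU θ))
    (fun θ => hu.hasDerivAt_fderiv_comp_of_isOpen hU (hγ θ) (hγ' θ) (hγU θ)) hg''c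
    (by simp [γ]) (by simp [γ])
  simp only [cosCoeff]
  set B : ℝ → ℝ := fun θ => fderiv ℝ u (x + s • rotate θ v) (rotate θ v) * cos θ
  set C : ℝ → ℝ := fun θ => u (x + s • rotate θ v) * cos θ
  set D : ℝ → ℝ := fun θ => (g'' θ + u (γ θ)) * cos θ
  have hpointwise (θ : ℝ) : s ^ 2 * (fderiv ℝ (fderiv ℝ u) (x + s • rotate θ v)
      (perp (rotate θ v)) (perp (rotate θ v)) * cos θ) = s * B θ - C θ + D θ := by
    simp only [B, C, D, g'', γ, perp_rotate, perp_perp, rotate_neg, map_smul, map_neg,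
      smul_apply, smul_eq_mul]
    ring
  have hBc : Continuous B :=
    continuous_cosCoeff_integrand hv hρ (hu.continuousOn_uncurry_fderiv_apply hU) hs
  have hCc : Continuous C := continuous_cosCoeff_integrand (G := fun y _ => u y) hv hρ
    (hu.continuousOn.comp continuousOn_fst fun _ hp => hp.1) hs
  have hDc : Continuous D := (hg''c.add (hu.continuousOn.comp_continuous hγc hγU)).mul
    continuous_cos
  rw [← intervalIntegral.integral_const_mul,
    intervalIntegral.integral_congr fun θ _ => hpointwise θ, intervalIntegral.integral_add,
    hperiodic, add_zero, intervalIntegral.integral_sub, intervalIntegral.integral_const_mul]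
  all_goals apply Continuous.intervalIntegrable; fun_prop

theorem sq_mul_cosCoeff_lap2 (hu : ContDiffOn ℝ 2 u U) (hU : IsOpen U) (hv : ‖v‖ = 1)
    (hρ : Metric.ball x ρ ⊆ U) {s : ℝ} (hs : s ∈ Ioo (-ρ) ρ) :
    s ^ 2 * cosCoeff (fun y _ => lap2 u y) x v s
      = s ^ 2 * cosCoeff (fun y e => fderiv ℝ (fderiv ℝ u) y e e) x v s
        + s * cosCoeff (fun y e => fderiv ℝ u y e) x v s - cosCoeff (fun y _ => u y) x v s := by
  rw [cosCoeff_lap2 hu hU hv hρ hs, mul_add, sq_mul_cosCoeff_fderiv_fderiv_perp hu hU hv hρ hs]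
  ring

theorem integral_weight_mul_cosCoeff_lap2 (hu : ContDiffOn ℝ 2 u U) (hU : IsOpen U) {R : ℝ}
    (hR : 0 < R) (hball : Metric.closedBall x R ⊆ U) (hv : ‖v‖ = 1) :
    ∫ s in (0)..R, (1 - s ^ 2 / R ^ 2) * cosCoeff (fun y _ => lap2 u y) x v s
      = 2 * cosCoeff (fun y _ => u y) x v R / R - 2 * (π * fderiv ℝ u x v) := by
  obtain ⟨δ, hδ, hthick⟩ := (isCompact_closedBall x R).exists_thickening_subset_open hU hball
  rw [thickening_closedBall hδ hR.le] at hthick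
  have hIcc : Icc 0 R ⊆ Ioo (-(δ + R)) (δ + R) := fun s hs =>
    ⟨by linarith [hs.1], by linarith [hs.2]⟩
  have hcont {G : E² → E² → ℝ} (hG : ContinuousOn (Function.uncurry G) (U ×ˢ univ)) :
      ContinuousOn (Function.uncurry G) (Metric.ball x (δ + R) ×ˢ univ) :=
    hG.mono (prod_mono hthick subset_rfl)
  have hu_c : ContinuousOn (Function.uncurry fun y (_ : E²) => u y) (U ×ˢ univ) :=
    hu.continuousOn.comp continuousOn_fst fun _ hp => hp.1
  have hDu_c := hu.continuousOn_uncurry_fderiv_apply hU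
  have hD2u_c := hu.continuousOn_uncurry_fderiv_fderiv_apply hU
  have hlap_c : ContinuousOn (Function.uncurry fun y (_ : E²) => lap2 u y) (U ×ˢ univ) :=
    (hu.continuousOn_lap2 hU).comp continuousOn_fst fun _ hp => hp.1
  have hline (y e : E²) : HasDerivAt (fun t : ℝ => y + t • e) e 0 := by
    simpa using ((hasDerivAt_id (0 : ℝ)).smul_const e).const_add y
  have hDu0 : cosCoeff (fun y e => fderiv ℝ u y e) x v 0 = π * fderiv ℝ u x v := by
    simpa [cosCoeff] using integral_apply_rotate_mul_cos (fderiv ℝ u x) v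
  rw [← hDu0]
  exact integral_one_sub_sq_div_sq_mul_eq_of_bessel hR cosCoeff_zero
    (fun s hs => hasDerivAt_cosCoeff hv (hcont hu_c) (hcont hDu_c) (fun y hy e => by
      simpa using hu.hasDerivAt_comp_of_isOpen hU (hline y e) (by simpa using hthick hy))
      (hIcc hs))
    (fun s hs => hasDerivAt_cosCoeff hv (hcont hDu_c) (hcont hD2u_c) (fun y hy e => by
      simpa using hu.hasDerivAt_fderiv_comp_of_isOpen hU (hline y e) (hasDerivAt_const _ e)
        (by simpa using hthick hy)) (hIcc hs))
    ((continuousOn_cosCoeff hv (hcont hlap_c)).mono hIcc)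
    (fun s hs => sq_mul_cosCoeff_lap2 hu hU hv hthick (hIcc (Ioo_subset_Icc_self hs)))

theorem abs_integral_weight_mul_cosCoeff_lap2_le (hu : ContDiffOn ℝ 2 u U) (hU : IsOpen U)
    {R M : ℝ} (hR : 0 < R) (hball : Metric.closedBall x R ⊆ U)
    (hM : ∀ y ∈ Metric.closedBall x R, |lap2 u y| ≤ M) (hv : ‖v‖ = 1) :
    |∫ s in (0)..R, (1 - s ^ 2 / R ^ 2) * cosCoeff (fun y _ => lap2 u y) x v s| ≤ 4 * M * R := by
  rw [← Real.norm_eq_abs]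
  refine (intervalIntegral.norm_integral_le_of_norm_le_const fun s hs => ?_).trans_eq
    (by rw [sub_zero, abs_of_pos hR])
  rw [uIoc_of_le hR.le] at hs
  have hmem (θ : ℝ) : x + s • rotate θ v ∈ Metric.closedBall x R := by
    simpa [norm_smul_rotate hv, abs_of_pos hs.1] using hs.2
  rw [Real.norm_eq_abs, abs_mul, ← one_mul (4 * M)]
  exact mul_le_mul (abs_one_sub_sq_div_sq_le_one hs.1.le hs.2)
    (abs_cosCoeff_le ((hu.continuousOn_lap2 hU).comp_continuous (by fun_prop)
      fun θ => hball (hmem θ)) fun θ => hM _ (hmem θ)) (abs_nonneg _) zero_le_one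

theorem abs_fderiv_apply_le (hu : ContDiffOn ℝ 2 u U) (hU : IsOpen U) {R M S : ℝ} (hR : 0 < R)
    (hball : Metric.closedBall x R ⊆ U) (hM : ∀ y ∈ Metric.closedBall x R, |lap2 u y| ≤ M)
    (hS : ∀ y ∈ Metric.sphere x R, |u y| ≤ S) (hv : ‖v‖ = 1) :
    |fderiv ℝ u x v| ≤ R * M + 4 / (π * R) * S := by
  set f := cosCoeff (fun y _ => u y) x v
  set I := ∫ s in (0)..R, (1 - s ^ 2 / R ^ 2) * cosCoeff (fun y _ => lap2 u y) x v s
  have hmem (θ : ℝ) : x + R • rotate θ v ∈ Metric.sphere x R := by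
    simp [norm_smul_rotate hv, abs_of_pos hR]
  have hboundary : |f R| ≤ 4 * S :=
    abs_cosCoeff_le (hu.continuousOn.comp_continuous (by fun_prop) fun θ =>
      hball (Metric.sphere_subset_closedBall (hmem θ))) fun θ => hS _ (hmem θ)
  have hinterior : |I| ≤ 4 * M * R :=
    abs_integral_weight_mul_cosCoeff_lap2_le hu hU hR hball hM hv
  have hpi_mul : π * |fderiv ℝ u x v| ≤ 4 * S / R + 2 * M * R := by
    have hI : I = 2 * f R / R - 2 * (π * fderiv ℝ u x v) :=
      integral_weight_mul_cosCoeff_lap2 hu hU hR hball hv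
    have hsolve : π * fderiv ℝ u x v = f R / R - I / 2 := by rw [hI]; ring
    rw [← abs_of_pos pi_pos, ← abs_mul, hsolve]
    calc |f R / R - I / 2| ≤ |f R / R| + |I / 2| := abs_sub _ _
      _ = |f R| / R + |I| / 2 := by rw [abs_div, abs_div, abs_of_pos hR, abs_two]
      _ ≤ 4 * S / R + 4 * M * R / 2 := by gcongr
      _ = 4 * S / R + 2 * M * R := by ring
  have hM0 : 0 ≤ M := (abs_nonneg _).trans (hM x (Metric.mem_closedBall_self hR.le))
  have hsmall : 2 * M * R / π ≤ R * M := by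
    rw [div_le_iff₀ pi_pos]
    nlinarith [pi_gt_three, mul_nonneg hM0 hR.le]
  calc |fderiv ℝ u x v| ≤ (4 * S / R + 2 * M * R) / π := by
        rw [le_div_iff₀ pi_pos, mul_comm]; exact hpi_mul
    _ ≤ R * M + 4 / (π * R) * S := by
        rw [add_div, show 4 * S / R / π = 4 / (π * R) * S by field_simp]
        linarith

end Plane

theorem stmt10 (x : EuclideanSpace ℝ (Fin 2)) (R : ℝ) (hR : 0 < R)
    (u : EuclideanSpace ℝ (Fin 2) → ℝ)
    (U : Set (EuclideanSpace ℝ (Fin 2))) (hU : IsOpen U)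
    (hUball : Metric.closedBall x R ⊆ U)
    (hu : ContDiffOn ℝ 2 u U) :
    ‖gradient u x‖ ≤
      R * sSup ((fun y => |lap2 u y|) '' Metric.closedBall x R) +
        4 / (Real.pi * R) * sSup ((fun y => |u y|) '' Metric.sphere x R) := by
  have hbddM : BddAbove ((fun y => |lap2 u y|) '' Metric.closedBall x R) :=
    ((isCompact_closedBall x R).image_of_continuousOn
      ((hu.continuousOn_lap2 hU).mono hUball).abs).bddAbove
  have hbddS : BddAbove ((fun y => |u y|) '' Metric.sphere x R) :=
    ((isCompact_sphere x R).image_of_continuousOn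
      (hu.continuousOn.mono (Metric.sphere_subset_closedBall.trans hUball)).abs).bddAbove
  have hbound (v : EuclideanSpace ℝ (Fin 2)) (hv : ‖v‖ = 1) :=
    Plane.abs_fderiv_apply_le hu hU hR hUball
      (fun y hy => le_csSup hbddM (mem_image_of_mem _ hy))
      (fun y hy => le_csSup hbddS (mem_image_of_mem _ hy)) hv
  rw [← (InnerProductSpace.toDual ℝ _).norm_map, toDual_gradient]
  exact ContinuousLinearMap.opNorm_le_of_unit_norm
    ((abs_nonneg _).trans (hbound (EuclideanSpace.single 0 1) (by simp))) hbound
end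

section
/- Let E be a finite-dimensional real normed vector space, let r > 0, and let Ω₁, Ω₂ ⊆ E be compact convex sets each containing the closed ball of radius r centered at the origin. Then r · d_R(Ω₁,Ω₂) ≤ hausdorffDist(Ω₁,Ω₂), where d_R(Ω₁,Ω₂) := sup over x ∈ E, x ≠ 0, of |Real.log (gauge Ω₁ x / gauge Ω₂ x)| and gauge Ω denotes the Minkowski functional of Ω. -/
open Metric Set Pointwise

/-- The radial distance between two convex bodies containing the origin in their
interiors: the supremum over nonzero `x` of `|log (gauge Ω₁ x / gauge Ω₂ x)|`. -/
noncomputable def radialDist {E : Type*} [AddCommGroup E] [Module ℝ E]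
    (Ω₁ Ω₂ : Set E) : ℝ :=
  sSup ((fun x => |Real.log (gauge Ω₁ x / gauge Ω₂ x)|) '' {x : E | x ≠ 0})

/-- If every point of `Ω₁` is within `infDist ≤ H` of the compact convex set `Ω₂` which
contains the closed ball of radius `r`, then `Ω₁ ⊆ (1 + H/r) • Ω₂`. -/
lemma aux_subset_smul {E : Type*} [NormedAddCommGroup E] [NormedSpace ℝ E]
    {r H : ℝ} (hr : 0 < r) (hH : 0 ≤ H) {Ω₁ Ω₂ : Set E}
    (h2c : IsCompact Ω₂) (h2v : Convex ℝ Ω₂) (h2b : Metric.closedBall 0 r ⊆ Ω₂)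
    (hd : ∀ x ∈ Ω₁, Metric.infDist x Ω₂ ≤ H) :
    Ω₁ ⊆ (1 + H / r) • Ω₂ := by
  have h2ne : Ω₂.Nonempty := ⟨0, h2b (by simp [hr.le])⟩
  intro x hx
  obtain ⟨y, hy, hxy⟩ := h2c.exists_infDist_eq_dist h2ne x
  have hdist : dist x y ≤ H := hxy ▸ hd x hx
  rw [h2v.add_smul zero_le_one (by positivity)]
  refine ⟨y, ?_, x - y, ?_, by simp⟩
  · rw [one_smul]; exact hy
  rcases eq_or_lt_of_le hH with hH0 | hH0
  · have : x = y := by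
      rw [← dist_le_zero]; exact hdist.trans hH0.symm.le
    refine ⟨0, h2b (by simp [hr.le]), by simp [this]⟩
  · have hc : (H / r : ℝ) ≠ 0 := by positivity
    rw [mem_smul_set_iff_inv_smul_mem₀ hc]
    apply h2b
    rw [mem_closedBall_zero_iff, norm_smul]
    have : ‖x - y‖ ≤ H := by rwa [← dist_eq_norm]
    rw [norm_inv, Real.norm_eq_abs, abs_of_pos (by positivity)]
    rw [inv_mul_le_iff₀ (by positivity)]
    calc ‖x - y‖ ≤ H := this
      _ = H / r * r := by field_simp

/-- From the inclusion `Ω₁ ⊆ c • Ω₂` we get `gauge Ω₂ ≤ c * gauge Ω₁`. -/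
lemma aux_gauge_le {E : Type*} [NormedAddCommGroup E] [NormedSpace ℝ E]
    {c : ℝ} (hc : 0 < c) {Ω₁ Ω₂ : Set E} (habs : Absorbent ℝ Ω₁)
    (h : Ω₁ ⊆ c • Ω₂) (x : E) : gauge Ω₂ x ≤ c * gauge Ω₁ x := by
  have := gauge_mono habs h x
  rw [gauge_smul_left_of_nonneg hc.le] at this
  simpa [inv_mul_le_iff₀ hc] using this

theorem stmt12 {E : Type*} [NormedAddCommGroup E] [NormedSpace ℝ E] [FiniteDimensional ℝ E]
    (r : ℝ) (hr : 0 < r) (Ω₁ Ω₂ : Set E)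
    (h1c : IsCompact Ω₁) (h1v : Convex ℝ Ω₁) (h1b : Metric.closedBall 0 r ⊆ Ω₁)
    (h2c : IsCompact Ω₂) (h2v : Convex ℝ Ω₂) (h2b : Metric.closedBall 0 r ⊆ Ω₂) :
    r * radialDist Ω₁ Ω₂ ≤ Metric.hausdorffDist Ω₁ Ω₂ := by
  set H := Metric.hausdorffDist Ω₁ Ω₂ with hHdef
  have hH : 0 ≤ H := Metric.hausdorffDist_nonneg
  have h1ne : Ω₁.Nonempty := ⟨0, h1b (by simp [hr.le])⟩
  have h2ne : Ω₂.Nonempty := ⟨0, h2b (by simp [hr.le])⟩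
  have hfin : EMetric.hausdorffEdist Ω₁ Ω₂ ≠ ⊤ :=
    Metric.hausdorffEdist_ne_top_of_nonempty_of_bounded h1ne h2ne
      h1c.isBounded h2c.isBounded
  have habs1 : Absorbent ℝ Ω₁ :=
    ((absorbent_ball_zero hr).mono (Metric.ball_subset_closedBall.trans h1b))
  have habs2 : Absorbent ℝ Ω₂ :=
    ((absorbent_ball_zero hr).mono (Metric.ball_subset_closedBall.trans h2b))
  have hvb1 : Bornology.IsVonNBounded ℝ Ω₁ :=
    NormedSpace.isVonNBounded_of_isBounded _ h1c.isBounded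
  have hvb2 : Bornology.IsVonNBounded ℝ Ω₂ :=
    NormedSpace.isVonNBounded_of_isBounded _ h2c.isBounded
  set c : ℝ := 1 + H / r with hcdef
  have hc1 : (1:ℝ) ≤ c := by simp [hcdef]; positivity
  have hc0 : (0:ℝ) < c := lt_of_lt_of_le one_pos hc1
  have hsub12 : Ω₁ ⊆ c • Ω₂ :=
    aux_subset_smul hr hH h2c h2v h2b
      (fun x hx => Metric.infDist_le_hausdorffDist_of_mem hx hfin)
  have hsub21 : Ω₂ ⊆ c • Ω₁ :=
    aux_subset_smul hr hH h1c h1v h1b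
      (fun x hx => by
        rw [hHdef, Metric.hausdorffDist_comm]
        exact Metric.infDist_le_hausdorffDist_of_mem hx
          (by rwa [EMetric.hausdorffEdist_comm]))
  have hg21 : ∀ x, gauge Ω₂ x ≤ c * gauge Ω₁ x := aux_gauge_le hc0 habs1 hsub12
  have hg12 : ∀ x, gauge Ω₁ x ≤ c * gauge Ω₂ x := aux_gauge_le hc0 habs2 hsub21
  have hlogc : Real.log c ≤ H / r := by
    have := Real.log_le_sub_one_of_pos hc0
    simpa [hcdef] using this
  have key : ∀ x : E, x ≠ 0 → |Real.log (gauge Ω₁ x / gauge Ω₂ x)| ≤ H / r := by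
    intro x hx
    have hg1 : 0 < gauge Ω₁ x := (gauge_pos habs1 hvb1).2 hx
    have hg2 : 0 < gauge Ω₂ x := (gauge_pos habs2 hvb2).2 hx
    rw [abs_le]
    constructor
    · rw [Real.log_div hg1.ne' hg2.ne', neg_le, neg_sub]
      have : Real.log (gauge Ω₂ x) ≤ Real.log c + Real.log (gauge Ω₁ x) := by
        rw [← Real.log_mul hc0.ne' hg1.ne']
        exact Real.log_le_log (by positivity) (hg21 x)
      linarith [hlogc]
    · rw [Real.log_div hg1.ne' hg2.ne']
      have : Real.log (gauge Ω₁ x) ≤ Real.log c + Real.log (gauge Ω₂ x) := by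
        rw [← Real.log_mul hc0.ne' hg2.ne']
        exact Real.log_le_log (by positivity) (hg12 x)
      linarith [hlogc]
  have hsup : radialDist Ω₁ Ω₂ ≤ H / r := by
    apply Real.sSup_le
    · rintro v ⟨x, hx, rfl⟩
      exact key x hx
    · positivity
  calc r * radialDist Ω₁ Ω₂ ≤ r * (H / r) := by nlinarith
    _ = H := by field_simp
end
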